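/- arXiv:0911.0085 — 4 statements merged into one kernel-verified Lean document; each statement's English description precedes it below -/
import Mathlib

section
/- Let p be a prime, S a finite p-group, and F a fusion system on S. Then F is saturated if and only if F satisfies Axiom I_S (Aut_S(S) is a Sylow p-subgroup of Aut_F(S)) together with Axiom II (every φ ∈ Hom_F(P,S) such that φ(P) is fully F-centralized extends to a morphism in Hom_F(N_φ,S)). In particular, Axioms I_S and II together imply Axiom I: every fully F-normalized subgroup P ≤ S is fully F-centralized and Aut_S(P) is a Sylow p-subgroup of Aut_F(P). -/
/-! ## Collections of morphisms between subgroups -/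

section Collections

variable {S : Type*} [Group S]

/-- The conjugation homomorphism `P →* S`, `u ↦ s * u * s⁻¹`. -/
def conjHom (s : S) (P : Subgroup S) : P →* S :=
  (MulAut.conj s).toMonoidHom.comp P.subtype

/-- A "collection" of morphism sets on the poset of subgroups of `S`:
for each pair of subgroups `P Q ≤ S` a set of group homomorphisms `P →* S`
(to be thought of as morphisms from `P` to `Q`, i.e. maps landing in `Q`). -/
abbrev Collection (S : Type*) [Group S] :=
  ∀ (P : Subgroup S), Subgroup S → Set (P →* S)

namespace Collection

/-- `P` and `Q` are conjugate in the collection `C` if some morphism of `C`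
restricts to an isomorphism from `P` onto `Q`. -/
def IsConj (C : Collection S) (P Q : Subgroup S) : Prop :=
  ∃ φ ∈ C P Q, MonoidHom.range φ = Q

/-- `P` is fully centralized: its centralizer has maximal order in its conjugacy class. -/
def FullyCentralized (C : Collection S) (P : Subgroup S) : Prop :=
  ∀ Q : Subgroup S, C.IsConj P Q →
    Nat.card (Subgroup.centralizer (Q : Set S)) ≤ Nat.card (Subgroup.centralizer (P : Set S))

/-- `P` is fully normalized: its normalizer has maximal order in its conjugacy class. -/
def FullyNormalized (C : Collection S) (P : Subgroup S) : Prop :=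
  ∀ Q : Subgroup S, C.IsConj P Q → Nat.card (Subgroup.normalizer (Q : Set S)) ≤ Nat.card (Subgroup.normalizer (P : Set S))

end Collection

/-- The set `Aut_S(P)` of automorphisms of `P` induced by conjugation by elements of the
normalizer `N_S(P)`, as a set of homomorphisms `P →* S`. -/
def autSSet (P : Subgroup S) : Set (P →* S) :=
  {φ | ∃ s ∈ Subgroup.normalizer (P : Set S), φ = conjHom s P}

/-- `Aut_S(P)` is a Sylow `p`-subgroup of `Aut_C(P) = C P P`:  `Aut_S(P)` is contained
in `Aut_C(P)`, has `p`-power order, and has index prime to `p` in `Aut_C(P)`. -/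
def Collection.AutSIsSylow (p : ℕ) (C : Collection S) (P : Subgroup S) : Prop :=
  autSSet P ⊆ C P P ∧ (∃ n : ℕ, Nat.card (autSSet P) = p ^ n) ∧
    ∃ k : ℕ, ¬ p ∣ k ∧ Nat.card (C P P) = k * Nat.card (autSSet P)

/-- A collection is level-wise closed if it contains all conjugation maps induced by `S`,
the inverse of every isomorphism it contains, and all composites of composable
isomorphisms it contains. -/
def LevelwiseClosed (C : Collection S) : Prop :=
  (∀ (P Q : Subgroup S) (s : S), (∀ u ∈ P, s * u * s⁻¹ ∈ Q) → conjHom s P ∈ C P Q) ∧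
  (∀ (P Q : Subgroup S), ∀ φ ∈ C P Q, MonoidHom.range φ = Q → ∀ ψ : Q →* S,
    (∀ (u : P) (hq : (φ u : S) ∈ Q), ψ ⟨φ u, hq⟩ = u) → ψ ∈ C Q P) ∧
  (∀ (P Q R : Subgroup S) (φ : P →* S), φ ∈ C P Q → ∀ ψ : Q →* S, ψ ∈ C Q R →
    ∀ hφ : MonoidHom.range φ = Q, MonoidHom.range ψ = R →
    ψ.comp (φ.codRestrict Q (fun u => hφ ▸ show φ u ∈ φ.range from ⟨u, rfl⟩)) ∈ C P R)

end Collections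

/-! ## Fusion systems -/

section Fusion

variable {S : Type*} [Group S]

/-- A fusion system on a group `S`: for each pair of subgroups `P, Q ≤ S`, a set
`Hom P Q` of injective homomorphisms `P → Q` (represented as homomorphisms `P →* S`
with image contained in `Q`), containing all conjugation maps induced by `S`, closed
under composition, and such that every morphism restricts to an isomorphism onto its
image lying in the fusion system, whose inverse also lies in the fusion system. -/
structure FusionSystem (S : Type*) [Group S] where
  Hom : Collection S
  injective' : ∀ {P Q : Subgroup S} {φ : P →* S}, φ ∈ Hom P Q → Function.Injective φ
  mapsTo' : ∀ {P Q : Subgroup S} {φ : P →* S}, φ ∈ Hom P Q → ∀ u : P, φ u ∈ Q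
  conj_mem' : ∀ (P Q : Subgroup S) (s : S), (∀ u ∈ P, s * u * s⁻¹ ∈ Q) →
    conjHom s P ∈ Hom P Q
  comp_mem' : ∀ {P Q R : Subgroup S} {φ : P →* S} {ψ : Q →* S},
    (hφ : φ ∈ Hom P Q) → (hψ : ψ ∈ Hom Q R) →
    ψ.comp (φ.codRestrict Q (mapsTo' hφ)) ∈ Hom P R
  target_mem' : ∀ {P Q : Subgroup S} {φ : P →* S}, φ ∈ Hom P Q → φ ∈ Hom P φ.range
  inv_mem' : ∀ {P Q : Subgroup S} {φ : P →* S}, φ ∈ Hom P Q →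
    ∃ ψ ∈ Hom φ.range P, ∀ u : P, ψ ⟨φ u, ⟨u, rfl⟩⟩ = u

/-- The subgroup `N_φ = {x ∈ N_S(P) | ∃ y ∈ N_S(φ(P)), ∀ u ∈ P, φ(xux⁻¹) = yφ(u)y⁻¹}`. -/
def Nphi (P : Subgroup S) (φ : P →* S) : Subgroup S where
  carrier := {x | x ∈ Subgroup.normalizer (P : Set S) ∧ ∃ y ∈ Subgroup.normalizer (φ.range : Set S),
    ∀ (u v : S) (hu : u ∈ P) (hv : v ∈ P), v = x * u * x⁻¹ →
      φ ⟨v, hv⟩ = y * φ ⟨u, hu⟩ * y⁻¹}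
  one_mem' := by
    refine ⟨(Subgroup.normalizer (P : Set S)).one_mem, 1, (Subgroup.normalizer (φ.range : Set S)).one_mem, ?_⟩
    intro u v hu hv hveq
    have h1 : (⟨v, hv⟩ : P) = ⟨u, hu⟩ := Subtype.ext (show v = u by rw [hveq]; group)
    rw [h1]; group
  mul_mem' := by
    rintro x₁ x₂ ⟨hx₁, y₁, hy₁, h₁⟩ ⟨hx₂, y₂, hy₂, h₂⟩
    refine ⟨mul_mem hx₁ hx₂, y₁ * y₂, mul_mem hy₁ hy₂, ?_⟩
    intro u v hu hv hveq
    have hw : x₂ * u * x₂⁻¹ ∈ P := (Subgroup.mem_normalizer_iff.mp hx₂ u).mp hu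
    have e1 : φ ⟨v, hv⟩ = y₁ * φ ⟨x₂ * u * x₂⁻¹, hw⟩ * y₁⁻¹ :=
      h₁ _ _ hw hv (by rw [hveq]; group)
    have e2 : φ ⟨x₂ * u * x₂⁻¹, hw⟩ = y₂ * φ ⟨u, hu⟩ * y₂⁻¹ := h₂ _ _ hu hw rfl
    rw [e1, e2]; group
  inv_mem' := by
    rintro x ⟨hx, y, hy, h⟩
    refine ⟨Subgroup.inv_mem _ hx, y⁻¹, Subgroup.inv_mem _ hy, ?_⟩
    intro u v hu hv hveq
    have e1 : φ ⟨u, hu⟩ = y * φ ⟨v, hv⟩ * y⁻¹ :=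
      h _ _ hv hu (by rw [hveq]; group)
    rw [e1]; group

namespace FusionSystem

/-- Axiom I of saturation: every fully normalized subgroup is fully centralized and its
`S`-automorphism group is a Sylow `p`-subgroup of its full automorphism group. -/
def AxiomI (p : ℕ) (F : FusionSystem S) : Prop :=
  ∀ P : Subgroup S, F.Hom.FullyNormalized P →
    F.Hom.FullyCentralized P ∧ F.Hom.AutSIsSylow p P

/-- Axiom I restricted to the full subgroup `S` itself:
`Aut_S(S)` is a Sylow `p`-subgroup of `Aut_F(S)`. -/
def AxiomIS (p : ℕ) (F : FusionSystem S) : Prop :=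
  F.Hom.AutSIsSylow p ⊤

/-- Axiom II of saturation (the extension axiom): every morphism `φ : P → S` of `F`
whose image is fully centralized extends to a morphism of `F` defined on `N_φ`. -/
def AxiomII (F : FusionSystem S) : Prop :=
  ∀ (P : Subgroup S) (φ : P →* S), φ ∈ F.Hom P ⊤ →
    F.Hom.FullyCentralized φ.range →
    ∃ φbar ∈ F.Hom (Nphi P φ) ⊤,
      ∀ (u : S) (hu : u ∈ P) (hu' : u ∈ Nphi P φ), φbar ⟨u, hu'⟩ = φ ⟨u, hu⟩

/-- A fusion system is saturated if it satisfies Axioms I and II. -/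
def Saturated (p : ℕ) (F : FusionSystem S) : Prop :=
  F.AxiomI p ∧ F.AxiomII

end FusionSystem

/-- The closure of a collection: the smallest fusion system containing it.  (The morphism
sets of the closure are the intersections of the morphism sets over all fusion systems
containing the collection.) -/
def closureHom (C : Collection S) : Collection S :=
  fun P Q =>
    {φ | ∀ F : FusionSystem S, (∀ P' Q', C P' Q' ⊆ F.Hom P' Q') → φ ∈ F.Hom P Q}

/-- A level-wise closed collection `C` is saturated at `P ≤ S` if:
(I_P) every fully normalized `Q` conjugate to `P` in `C` is fully centralized and
`Aut_S(Q)` is a Sylow `p`-subgroup of `Aut_C(Q)`; and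
(II_P) every `φ ∈ Hom_C(P,S)` with fully centralized image extends to a morphism
`N_φ → S` in the closure of `C`. -/
def SaturatedAt (p : ℕ) (C : Collection S) (P : Subgroup S) : Prop :=
  (∀ Q : Subgroup S, C.IsConj P Q → C.FullyNormalized Q →
    C.FullyCentralized Q ∧ C.AutSIsSylow p Q) ∧
  (∀ φ ∈ C P ⊤, C.FullyCentralized (MonoidHom.range φ) →
    ∃ φbar ∈ closureHom C (Nphi P φ) ⊤,
      ∀ (u : S) (hu : u ∈ P) (hu' : u ∈ Nphi P φ), φbar ⟨u, hu'⟩ = φ ⟨u, hu⟩)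

end Fusion

/-!
Axiom I follows once every subgroup `P` has an `F`-conjugate `Q` that is fully centralized with
`Aut_S(Q)` Sylow in `Aut_F(Q)`. Indeed, if `P` is fully normalized, an isomorphism `P → Q`
adjusted by a Sylow conjugation inside `Aut_F(Q)` carries `Aut_S(P)` into `Aut_S(Q)`, and
`|N_S(X)| = |Aut_S(X)| |C_S(X)|` then forces both factors to agree for `P` and `Q`.

Such a `Q` is found by downward induction on `|P|`. Among the fully centralized conjugates `R`
of `P` take one with `|Aut_S(R)|` maximal. If `Aut_S(R)` is not Sylow, some `p`-element
`α ∈ Aut_F(R) \ Aut_S(R)` normalizes `Aut_S(R)`; then `N_α = N_S(R)`, so Axiom II extends `α`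
to `N_S(R)`, which is larger than `R` because `R ≠ S` by Axiom I_S. Transport along an
isomorphism from `N_S(R)` onto a good conjugate, adjusted so that a `p`-power `β` of the
extension becomes conjugation by an element of `S`, maps `R` to a fully centralized conjugate
`R'` with `⟨Aut_S(R), β|_R⟩` embedded in `Aut_S(R')`, contradicting the maximality of `R`.
-/

theorem Subgroup.relIndex_mul_card_of_le {G : Type*} [Group G] {H K : Subgroup G} (h : H ≤ K) :
    H.relIndex K * Nat.card H = Nat.card K := by
  rw [← Nat.card_congr (Subgroup.subgroupOfEquivOfLe h).toEquiv]
  exact (H.subgroupOf K).index_mul_card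

theorem Subgroup.card_lt_card_of_lt {G : Type*} [Group G] {H K : Subgroup G} [Finite K]
    (h : H < K) : Nat.card H < Nat.card K :=
  (Subgroup.card_le_of_le h.le).lt_of_ne fun heq => h.ne (Subgroup.eq_of_le_of_card_ge h.le heq.ge)

theorem range_subtype_comp_mulEquiv {S : Type*} [Group S] {P Q : Subgroup S} (e : P ≃* Q) :
    (Q.subtype.comp e.toMonoidHom).range = Q := by
  simp [MonoidHom.range_comp, ← MonoidHom.range_eq_map]

theorem Function.Semiconj.mulAut_pow {G H : Type*} [Group G] [Group H] {f : G → H}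
    {a : MulAut G} {b : MulAut H} (h : Function.Semiconj f a b) (n : ℕ) :
    Function.Semiconj f ⇑(a ^ n) ⇑(b ^ n) := by
  induction n with
  | zero => exact Function.Semiconj.id_right
  | succ n ih =>
    rw [pow_succ, pow_succ, MulAut.coe_mul, MulAut.coe_mul]
    exact ih.comp_right h

section SylowFacts

variable {G : Type*} [Group G] [Finite G] {p : ℕ} [Fact p.Prime]

theorem IsPGroup.exists_conj_le_of_not_dvd_relIndex {H K M : Subgroup G} (hH : IsPGroup p H)
    (hK : IsPGroup p K) (hHM : H ≤ M) (hKi : ¬ p ∣ K.relIndex M) :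
    ∃ g ∈ M, ∀ h ∈ H, g * h * g⁻¹ ∈ K := by
  obtain ⟨T, hHT⟩ := (hH.comap_of_injective M.subtype M.subtype_injective).exists_le_sylow
  obtain ⟨g, hg⟩ := MulAction.exists_smul_eq M T
    ((hK.comap_of_injective M.subtype M.subtype_injective).toSylow hKi)
  refine ⟨g, g.2, fun h hh => ?_⟩
  have hgT := Subgroup.smul_mem_pointwise_smul (⟨h, hHM hh⟩ : M) (MulAut.conj g) T (hHT hh)
  rw [← Sylow.coe_subgroup_smul, hg] at hgT
  exact hgT

theorem IsPGroup.exists_mem_normalizer_notMem_of_dvd_relIndex {K M : Subgroup G}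
    (hK : IsPGroup p K) (hKM : K ≤ M) (hKi : p ∣ K.relIndex M) :
    ∃ a ∈ M, a ∉ K ∧ a ∈ Subgroup.normalizer (K : Set G) ∧ ∃ c, orderOf a = p ^ c := by
  set K' := K.subgroupOf M
  obtain ⟨T, hK'T⟩ := (hK.comap_of_injective M.subtype M.subtype_injective).exists_le_sylow
  have hK'T_ne : K'.subgroupOf T ≠ ⊤ := fun h =>
    T.not_dvd_index (le_antisymm (Subgroup.subgroupOf_eq_top.mp h) hK'T ▸ hKi)
  have := T.isPGroup'.isNilpotent
  obtain ⟨a, ha_norm, ha_notMem⟩ := SetLike.exists_of_lt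
    (Group.normalizerCondition_of_isNilpotent _ (lt_top_iff_ne_top.mpr hK'T_ne))
  refine ⟨a, (a : M).2, fun h => ha_notMem h, ?_, ?_⟩
  · refine Subgroup.mem_normalizer_fintype fun k hk => ?_
    exact (Subgroup.mem_normalizer_iff.mp ha_norm ⟨⟨k, hKM hk⟩, hK'T hk⟩).mp hk
  · obtain ⟨c, hc⟩ := IsPGroup.iff_orderOf.mp T.isPGroup' a
    exact ⟨c, by rw [Subgroup.orderOf_coe, Subgroup.orderOf_coe, hc]⟩

theorem exists_not_dvd_orderOf_pow_eq_prime_pow (g : G) :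
    ∃ m, ¬ p ∣ m ∧ ∃ c, orderOf (g ^ m) = p ^ c := by
  have hg : orderOf g ≠ 0 := (orderOf_pos g).ne'
  refine ⟨ordCompl[p] (orderOf g), Nat.not_dvd_ordCompl Fact.out hg,
    (orderOf g).factorization p, ?_⟩
  rw [orderOf_pow_of_dvd (Nat.ordCompl_pos p hg).ne' (Nat.ordCompl_dvd _ p),
    Nat.div_div_self (Nat.ordProj_dvd _ p) hg]

end SylowFacts

section AutS

variable {S : Type*} [Group S]

/-- `Aut_S(P)`. -/
def autS (P : Subgroup S) : Subgroup (MulAut P) := P.normalizerMonoidHom.range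

theorem mem_autS_iff {P : Subgroup S} {g : MulAut P} :
    g ∈ autS P ↔ ∃ s : S, ∀ u : P, (g u : S) = s * u * s⁻¹ := by
  refine ⟨fun ⟨s, hs⟩ => ⟨s, fun u => by rw [← hs]; rfl⟩, fun ⟨s, hs⟩ => ?_⟩
  have hsN : s ∈ Subgroup.normalizer (P : Set S) := Subgroup.mem_normalizer_iff.mpr fun x =>
    ⟨fun hx => hs ⟨x, hx⟩ ▸ (g ⟨x, hx⟩).2, fun hx => by
      have h := hs (g⁻¹ ⟨_, hx⟩)
      rw [MulAut.inv_apply, MulEquiv.apply_symm_apply, mul_left_inj, mul_right_inj] at h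
      exact h ▸ (g⁻¹ ⟨_, hx⟩).2⟩
  exact ⟨⟨s, hsN⟩, MulEquiv.ext fun u => Subtype.ext (hs u).symm⟩

theorem congr_mem_autS_iff {P Q : Subgroup S} (e : P ≃* Q) {g : MulAut P} :
    MulAut.congr e g ∈ autS Q ↔ ∃ s : S, ∀ u : P, (e (g u) : S) = s * e u * s⁻¹ := by
  simp only [mem_autS_iff, e.surjective.forall, MulAut.congr_apply, MulEquiv.trans_apply,
    MulEquiv.symm_apply_apply]

theorem isPGroup_autS {p : ℕ} (hS : IsPGroup p S) (P : Subgroup S) : IsPGroup p (autS P) :=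
  (hS.to_subgroup _).of_surjective _ P.normalizerMonoidHom.rangeRestrict_surjective

theorem card_autS_mul_card_centralizer (P : Subgroup S) :
    Nat.card (autS P) * Nat.card (Subgroup.centralizer (P : Set S)) =
      Nat.card (Subgroup.normalizer (P : Set S)) := by
  rw [Subgroup.card_eq_card_quotient_mul_card_subgroup P.normalizerMonoidHom.ker,
    Nat.card_congr (QuotientGroup.quotientKerEquivRange _).toEquiv,
    Subgroup.normalizerMonoidHom_ker,
    Nat.card_congr (Subgroup.subgroupOfEquivOfLe (Subgroup.centralizer_le_normalizer _)).toEquiv]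
  rfl

theorem autSSet_eq_image (P : Subgroup S) :
    autSSet P = (fun g : MulAut P => P.subtype.comp g.toMonoidHom) '' autS P := by
  refine Set.Subset.antisymm ?_ ?_
  · rintro _ ⟨s, hs, rfl⟩
    exact ⟨_, ⟨⟨s, hs⟩, rfl⟩, rfl⟩
  · rintro _ ⟨_, ⟨x, rfl⟩, rfl⟩
    exact ⟨x, x.2, rfl⟩

theorem card_autSSet (P : Subgroup S) : Nat.card (autSSet P) = Nat.card (autS P) := by
  rw [autSSet_eq_image]
  exact Nat.card_image_of_injective (fun g g' h => MulEquiv.ext fun u =>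
    Subtype.ext (DFunLike.congr_fun h u)) _

theorem nphi_eq_normalizer {R : Subgroup S} {α : MulAut R}
    (hα : α ∈ Subgroup.normalizer (autS R : Set (MulAut R))) :
    Nphi R (R.subtype.comp α.toMonoidHom) = Subgroup.normalizer (R : Set S) := by
  refine le_antisymm (fun _ hx => hx.1) fun x hx => ⟨hx, ?_⟩
  obtain ⟨⟨y, hyN⟩, hy⟩ := (Subgroup.mem_normalizer_iff.mp hα _).mp ⟨⟨x, hx⟩, rfl⟩
  refine ⟨y, by rwa [range_subtype_comp_mulEquiv], fun u v hu hv huv => ?_⟩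
  have h := congrArg (fun g : MulAut R => (g (α ⟨u, hu⟩) : S)) hy
  simp only [MulAut.mul_apply, MulAut.inv_apply, MulEquiv.symm_apply_apply] at h
  subst huv
  exact h.symm

variable {N N' R R' : Subgroup S} {e : N ≃* N'} {e' : R ≃* R'}

theorem congr_conj_mem_autS (e : N ≃* N') (x : N) : MulAut.congr e (MulAut.conj x) ∈ autS N' :=
  (congr_mem_autS_iff e).mpr ⟨e x, fun u => by simp⟩

theorem congr_mem_autS_of_semiconj (hR : R ≤ N)
    (hee' : ∀ u : R, (e' u : S) = e (Subgroup.inclusion hR u)) {g : MulAut R} {k : MulAut N}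
    (hgk : Function.Semiconj (Subgroup.inclusion hR) g k) (hk : MulAut.congr e k ∈ autS N') :
    MulAut.congr e' g ∈ autS R' := by
  obtain ⟨s, hs⟩ := (congr_mem_autS_iff e).mp hk
  refine (congr_mem_autS_iff e').mpr ⟨s, fun u => ?_⟩
  rw [hee', hee', hgk u, hs]

theorem card_centralizer_le_of_restrict [Finite S] (hR : R ≤ N)
    (hee' : ∀ u : R, (e' u : S) = e (Subgroup.inclusion hR u))
    (hC : Subgroup.centralizer (R : Set S) ≤ N) :
    Nat.card (Subgroup.centralizer (R : Set S)) ≤ Nat.card (Subgroup.centralizer (R' : Set S)) := by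
  have hmem : ∀ c : Subgroup.centralizer (R : Set S),
      (e ⟨c, hC c.2⟩ : S) ∈ Subgroup.centralizer (R' : Set S) := by
    intro c
    refine Subgroup.mem_centralizer_iff.mpr fun r hr => ?_
    obtain ⟨u, rfl⟩ : ∃ u, (e' u : S) = r := ⟨e'.symm ⟨r, hr⟩, by simp⟩
    have hcomm : Subgroup.inclusion hR u * ⟨c, hC c.2⟩ = ⟨c, hC c.2⟩ * Subgroup.inclusion hR u :=
      Subtype.ext (Subgroup.mem_centralizer_iff.mp c.2 u u.2)
    rw [hee', ← Subgroup.coe_mul, ← Subgroup.coe_mul, ← map_mul, ← map_mul, hcomm]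
  refine Nat.card_le_card_of_injective (fun c => ⟨_, hmem c⟩) fun c c' h => ?_
  have h' : (e ⟨c, hC c.2⟩ : S) = e ⟨c', hC c'.2⟩ :=
    congrArg (fun x : Subgroup.centralizer (R' : Set S) => (x : S)) h
  simpa using e.injective (Subtype.ext h')

end AutS

namespace FusionSystem

variable {S : Type*} [Group S]

section Morphisms

variable (F : FusionSystem S)

theorem conjHom_one_mem {P Q : Subgroup S} (h : P ≤ Q) : conjHom 1 P ∈ F.Hom P Q :=
  F.conj_mem' P Q 1 fun u hu => by simpa using h hu

theorem comp_mem {P Q R : Subgroup S} {φ : P →* S} {ψ : Q →* S} (hφ : φ ∈ F.Hom P Q)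
    (hψ : ψ ∈ F.Hom Q R) {χ : P →* S} (hχ : ∀ u, χ u = ψ ⟨φ u, F.mapsTo' hφ u⟩) :
    χ ∈ F.Hom P R := by
  convert F.comp_mem' hφ hψ
  ext u
  exact hχ u

theorem mem_hom_of_le {P Q Q' : Subgroup S} {φ : P →* S} (hφ : φ ∈ F.Hom P Q) (h : Q ≤ Q') :
    φ ∈ F.Hom P Q' :=
  F.comp_mem hφ (F.conjHom_one_mem h) fun u => by simp [conjHom]

def IsIso {P Q : Subgroup S} (e : P ≃* Q) : Prop :=
  Q.subtype.comp e.toMonoidHom ∈ F.Hom P Q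

end Morphisms

variable {F : FusionSystem S}

theorem isIso_refl (P : Subgroup S) : F.IsIso (MulEquiv.refl P) := by
  unfold IsIso
  convert F.conjHom_one_mem le_rfl
  ext u
  simp [conjHom]

theorem IsIso.trans {P Q R : Subgroup S} {e : P ≃* Q} {e' : Q ≃* R} (he : F.IsIso e)
    (he' : F.IsIso e') : F.IsIso (e.trans e') :=
  F.comp_mem he he' fun _ => rfl

theorem IsIso.symm {P Q : Subgroup S} {e : P ≃* Q} (he : F.IsIso e) : F.IsIso e.symm := by
  obtain ⟨ψ, hψ, hψe⟩ := F.inv_mem' he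
  have hQ : Q ≤ (Q.subtype.comp e.toMonoidHom).range := fun v hv =>
    ⟨e.symm ⟨v, hv⟩, by simp⟩
  refine F.comp_mem (F.conjHom_one_mem hQ) hψ fun v => ?_
  have := hψe (e.symm v)
  simp only [MonoidHom.coe_comp, Function.comp_apply, MulEquiv.coe_toMonoidHom,
    MulEquiv.apply_symm_apply, Subgroup.coe_subtype] at this
  exact this.symm.trans (congrArg ψ (Subtype.ext (by simp [conjHom])))

theorem isIso_ofInjective {P Q : Subgroup S} {φ : P →* S} (hφ : φ ∈ F.Hom P Q) :
    F.IsIso (MonoidHom.ofInjective (F.injective' hφ)) :=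
  F.target_mem' hφ

theorem IsIso.exists_restrict {N N' R : Subgroup S} {e : N ≃* N'} (he : F.IsIso e) (hR : R ≤ N) :
    ∃ (R' : Subgroup S) (e' : R ≃* R'), F.IsIso e' ∧
      ∀ u : R, (e' u : S) = e (Subgroup.inclusion hR u) := by
  have hθ : (N'.subtype.comp e.toMonoidHom).comp (Subgroup.inclusion hR) ∈ F.Hom R N' :=
    F.comp_mem (F.conjHom_one_mem hR) he fun _ => by simp [conjHom, Subgroup.inclusion]
  exact ⟨_, _, isIso_ofInjective hθ, fun _ => rfl⟩

theorem isConj_iff {P Q : Subgroup S} : F.Hom.IsConj P Q ↔ ∃ e : P ≃* Q, F.IsIso e := by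
  constructor
  · rintro ⟨φ, hφ, rfl⟩
    exact ⟨_, isIso_ofInjective hφ⟩
  · rintro ⟨e, he⟩
    exact ⟨_, he, range_subtype_comp_mulEquiv e⟩

theorem isConj_refl (P : Subgroup S) : F.Hom.IsConj P P :=
  isConj_iff.mpr ⟨_, isIso_refl P⟩

theorem _root_.Collection.IsConj.symm {P Q : Subgroup S} (h : F.Hom.IsConj P Q) :
    F.Hom.IsConj Q P :=
  let ⟨_, he⟩ := isConj_iff.mp h
  isConj_iff.mpr ⟨_, he.symm⟩

theorem _root_.Collection.IsConj.trans {P Q R : Subgroup S} (h : F.Hom.IsConj P Q)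
    (h' : F.Hom.IsConj Q R) : F.Hom.IsConj P R :=
  let ⟨_, he⟩ := isConj_iff.mp h
  let ⟨_, he'⟩ := isConj_iff.mp h'
  isConj_iff.mpr ⟨_, he.trans he'⟩

theorem card_eq_of_isConj {P Q : Subgroup S} (h : F.Hom.IsConj P Q) :
    Nat.card P = Nat.card Q :=
  let ⟨e, _⟩ := isConj_iff.mp h
  Nat.card_congr e.toEquiv

variable (F) in
/-- `Aut_F(P)`. -/
def FAut (P : Subgroup S) : Subgroup (MulAut P) where
  carrier := {g | F.IsIso g}
  mul_mem' hg hh := IsIso.trans hh hg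
  one_mem' := isIso_refl P
  inv_mem' := IsIso.symm

theorem IsIso.congr_mem_FAut {P Q : Subgroup S} {e : P ≃* Q} (he : F.IsIso e) {g : MulAut P}
    (hg : g ∈ F.FAut P) : MulAut.congr e g ∈ F.FAut Q :=
  he.symm.trans (IsIso.trans hg he)

theorem autS_le_FAut (P : Subgroup S) : autS P ≤ F.FAut P := by
  rintro _ ⟨x, rfl⟩
  exact F.conj_mem' P P x fun u hu => (Subgroup.mem_normalizer_iff.mp x.2 u).mp hu

variable [Finite S]

theorem card_FAut_le_of_isConj {P Q : Subgroup S} (h : F.Hom.IsConj P Q) :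
    Nat.card (F.FAut P) ≤ Nat.card (F.FAut Q) := by
  obtain ⟨e, he⟩ := isConj_iff.mp h
  rw [← Subgroup.card_map_of_injective (f := (MulAut.congr e).toMonoidHom)
    (MulAut.congr e).injective]
  exact Subgroup.card_le_of_le (Subgroup.map_le_iff_le_comap.mpr fun _ => he.congr_mem_FAut)

theorem card_FAut_eq_of_isConj {P Q : Subgroup S} (h : F.Hom.IsConj P Q) :
    Nat.card (F.FAut P) = Nat.card (F.FAut Q) :=
  (card_FAut_le_of_isConj h).antisymm (card_FAut_le_of_isConj h.symm)

theorem hom_self_eq_image (P : Subgroup S) :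
    F.Hom P P = (fun g : MulAut P => P.subtype.comp g.toMonoidHom) '' F.FAut P := by
  refine Set.Subset.antisymm (fun φ hφ => ?_) (Set.image_subset_iff.mpr fun _ hg => hg)
  have hbij : Function.Bijective (φ.codRestrict P (F.mapsTo' hφ)) :=
    Finite.injective_iff_bijective.mp fun a b hab => F.injective' hφ (congrArg Subtype.val hab)
  exact ⟨MulEquiv.ofBijective _ hbij, hφ, rfl⟩

theorem card_hom_self (P : Subgroup S) : Nat.card (F.Hom P P) = Nat.card (F.FAut P) := by
  rw [hom_self_eq_image]
  exact Nat.card_image_of_injective (fun g g' h => MulEquiv.ext fun u =>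
    Subtype.ext (DFunLike.congr_fun h u)) _

theorem fullyNormalized_top : F.Hom.FullyNormalized (⊤ : Subgroup S) := fun Q _ => by
  rw [Subgroup.normalizer_eq_top (H := ⊤), Subgroup.card_top]
  exact Subgroup.card_le_card_group _

theorem exists_isConj_fullyCentralized (P : Subgroup S) :
    ∃ R, F.Hom.IsConj P R ∧ F.Hom.FullyCentralized R := by
  have : Nonempty {R // F.Hom.IsConj P R} := ⟨⟨P, isConj_refl P⟩⟩
  obtain ⟨⟨R, hPR⟩, hR⟩ := Finite.exists_max fun R : {R // F.Hom.IsConj P R} =>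
    Nat.card (Subgroup.centralizer (R.1 : Set S))
  exact ⟨R, hPR, fun Q hRQ => hR ⟨Q, hPR.trans hRQ⟩⟩

theorem exists_isConj_fullyCentralized_forall_card_autS_le (P : Subgroup S) :
    ∃ R, F.Hom.IsConj P R ∧ F.Hom.FullyCentralized R ∧
      ∀ R', F.Hom.IsConj P R' → F.Hom.FullyCentralized R' →
        Nat.card (autS R') ≤ Nat.card (autS R) := by
  obtain ⟨R₀, hPR₀, hR₀⟩ := exists_isConj_fullyCentralized (F := F) P
  have : Nonempty {R // F.Hom.IsConj P R ∧ F.Hom.FullyCentralized R} := ⟨⟨R₀, hPR₀, hR₀⟩⟩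
  obtain ⟨⟨R, hPR, hRc⟩, hR⟩ := Finite.exists_max
    fun R : {R // F.Hom.IsConj P R ∧ F.Hom.FullyCentralized R} => Nat.card (autS R.1)
  exact ⟨R, hPR, hRc, fun R' hPR' hR'c => hR ⟨R', hPR', hR'c⟩⟩

theorem exists_FAut_normalizer_semiconj (hII : F.AxiomII) {R : Subgroup S}
    (hRc : F.Hom.FullyCentralized R) {α : MulAut R} (hαF : α ∈ F.FAut R)
    (hαN : α ∈ Subgroup.normalizer (autS R : Set (MulAut R))) :
    ∃ ᾱ ∈ F.FAut (Subgroup.normalizer (R : Set S)),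
      Function.Semiconj (Subgroup.inclusion Subgroup.le_normalizer) α ᾱ := by
  set N := Subgroup.normalizer (R : Set S)
  have hext := hII R _ (F.mem_hom_of_le hαF le_top) (by rwa [range_subtype_comp_mulEquiv])
  rw [nphi_eq_normalizer hαN] at hext
  obtain ⟨φ, hφ, hφα⟩ := hext
  have hφR : ∀ u : R, φ (Subgroup.inclusion Subgroup.le_normalizer u) = α u :=
    fun u => hφα u u.2 _
  have hφN : ∀ x : N, φ x ∈ N := fun x => Subgroup.mem_normalizer_fintype fun r hr => by
    obtain ⟨u, rfl⟩ : ∃ u, (α u : S) = r := ⟨α⁻¹ ⟨r, hr⟩, by simp⟩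
    have hconj : x * Subgroup.inclusion Subgroup.le_normalizer u * x⁻¹ =
        Subgroup.inclusion Subgroup.le_normalizer (R.normalizerMonoidHom x u) := rfl
    rw [← hφR, ← map_inv, ← map_mul, ← map_mul, hconj, hφR]
    exact SetLike.coe_mem _
  have hφNN : φ ∈ F.Hom N N := F.mem_hom_of_le (F.target_mem' hφ) (by
    rintro _ ⟨x, rfl⟩
    exact hφN x)
  rw [hom_self_eq_image] at hφNN
  obtain ⟨ᾱ, hᾱF, rfl⟩ := hφNN
  exact ⟨ᾱ, hᾱF, fun u => Subtype.ext (hφR u).symm⟩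

variable {p : ℕ} [Fact p.Prime]

theorem autSIsSylow_iff (hS : IsPGroup p S) (P : Subgroup S) :
    F.Hom.AutSIsSylow p P ↔ ¬ p ∣ (autS P).relIndex (F.FAut P) := by
  have hcard : Nat.card (F.Hom P P) = (autS P).relIndex (F.FAut P) * Nat.card (autSSet P) := by
    rw [card_hom_self, card_autSSet, Subgroup.relIndex_mul_card_of_le (autS_le_FAut P)]
  constructor
  · rintro ⟨-, -, k, hk, hcard'⟩
    rw [hcard, card_autSSet, Nat.mul_left_inj Nat.card_pos.ne'] at hcard'
    exact hcard' ▸ hk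
  · intro h
    refine ⟨?_, ?_, _, h, hcard⟩
    · rw [autSSet_eq_image, hom_self_eq_image]
      exact Set.image_mono (autS_le_FAut P)
    · obtain ⟨n, hn⟩ := IsPGroup.iff_card.mp (isPGroup_autS hS P)
      exact ⟨n, card_autSSet P ▸ hn⟩

theorem exists_isIso_congr_mem_autS (hS : IsPGroup p S) {P Q : Subgroup S}
    (hPQ : F.Hom.IsConj P Q) (hQ : ¬ p ∣ (autS Q).relIndex (F.FAut Q))
    {B : Subgroup (MulAut P)} (hB : IsPGroup p B) (hBF : B ≤ F.FAut P) :
    ∃ e : P ≃* Q, F.IsIso e ∧ ∀ g ∈ B, MulAut.congr e g ∈ autS Q := by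
  obtain ⟨e₀, he₀⟩ := isConj_iff.mp hPQ
  obtain ⟨χ, hχF, hχ⟩ :=
    (hB.map (MulAut.congr e₀).toMonoidHom).exists_conj_le_of_not_dvd_relIndex
      (M := F.FAut Q) (isPGroup_autS hS Q)
      (Subgroup.map_le_iff_le_comap.mpr fun _ hg => he₀.congr_mem_FAut (hBF hg)) hQ
  refine ⟨e₀.trans χ, he₀.trans hχF, fun g hg => ?_⟩
  convert hχ _ ⟨g, hg, rfl⟩ using 1
  ext u
  simp

theorem card_centralizer_eq_and_card_autS_eq (hS : IsPGroup p S) {P Q : Subgroup S}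
    (hPn : F.Hom.FullyNormalized P) (hPQ : F.Hom.IsConj P Q) (hQc : F.Hom.FullyCentralized Q)
    (hQ : ¬ p ∣ (autS Q).relIndex (F.FAut Q)) :
    Nat.card (Subgroup.centralizer (P : Set S)) = Nat.card (Subgroup.centralizer (Q : Set S)) ∧
      Nat.card (autS P) = Nat.card (autS Q) := by
  obtain ⟨e, -, he⟩ :=
    exists_isIso_congr_mem_autS hS hPQ hQ (isPGroup_autS hS P) (autS_le_FAut P)
  have hA : Nat.card (autS P) ≤ Nat.card (autS Q) := by
    rw [← Subgroup.card_map_of_injective (f := (MulAut.congr e).toMonoidHom)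
      (MulAut.congr e).injective]
    exact Subgroup.card_le_of_le (Subgroup.map_le_iff_le_comap.mpr he)
  have hC := hQc P hPQ.symm
  have hN := hPn Q hPQ
  rw [← card_autS_mul_card_centralizer, ← card_autS_mul_card_centralizer] at hN
  -- `|N_S(X)| = |Aut_S(X)| |C_S(X)|`; both factors grow from `P` to `Q`, the product does not
  exact ⟨hC.antisymm (Nat.le_of_mul_le_mul_left ((Nat.mul_le_mul_right _ hA).trans hN)
      Nat.card_pos),
    hA.antisymm (Nat.le_of_mul_le_mul_right ((Nat.mul_le_mul_left _ hC).trans hN) Nat.card_pos)⟩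

theorem axiomI_of_forall_exists_isConj (hS : IsPGroup p S)
    (h : ∀ P : Subgroup S, ∃ Q, F.Hom.IsConj P Q ∧ F.Hom.FullyCentralized Q ∧
      ¬ p ∣ (autS Q).relIndex (F.FAut Q)) :
    F.AxiomI p := by
  intro P hPn
  obtain ⟨Q, hPQ, hQc, hQ⟩ := h P
  obtain ⟨hC, hA⟩ := card_centralizer_eq_and_card_autS_eq hS hPn hPQ hQc hQ
  refine ⟨fun R hPR => hC ▸ hQc R (hPQ.symm.trans hPR), (autSIsSylow_iff hS P).mpr ?_⟩
  have hidx := Subgroup.relIndex_mul_card_of_le (autS_le_FAut (F := F) P)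
  rw [card_FAut_eq_of_isConj hPQ, hA, ← Subgroup.relIndex_mul_card_of_le (autS_le_FAut Q),
    Nat.mul_left_inj Nat.card_pos.ne'] at hidx
  rwa [hidx]

theorem exists_pGroup_FAut_normalizer_semiconj (hS : IsPGroup p S) (hII : F.AxiomII)
    {R : Subgroup S} (hRc : F.Hom.FullyCentralized R) (hR : p ∣ (autS R).relIndex (F.FAut R)) :
    ∃ β ∈ F.FAut (Subgroup.normalizer (R : Set S)), IsPGroup p (Subgroup.zpowers β) ∧
      ∃ α ∉ autS R, Function.Semiconj (Subgroup.inclusion Subgroup.le_normalizer) α β := by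
  obtain ⟨α, hαF, hαA, hαN, c, hc⟩ :=
    (isPGroup_autS hS R).exists_mem_normalizer_notMem_of_dvd_relIndex (autS_le_FAut R) hR
  obtain ⟨ᾱ, hᾱF, hᾱ⟩ := exists_FAut_normalizer_semiconj hII hRc hαF hαN
  obtain ⟨m, hm, d, hd⟩ := exists_not_dvd_orderOf_pow_eq_prime_pow (p := p) ᾱ
  refine ⟨ᾱ ^ m, pow_mem hᾱF m, IsPGroup.of_card (by rw [Nat.card_zpowers, hd]), α ^ m,
    fun h => hαA ?_, hᾱ.mulAut_pow m⟩
  -- `m` is prime to the `p`-power order of `α`, so `α` is a power of `α ^ m`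
  have hcop : m.gcd (orderOf α) = 1 :=
    hc ▸ (Nat.coprime_comm.mp ((Nat.Prime.coprime_iff_not_dvd Fact.out).mpr hm)).pow_right c
  exact Subgroup.zpowers_le.mpr h (mem_zpowers_pow_iff.mpr hcop)

theorem exists_isConj_card_autS_lt (hS : IsPGroup p S) (hII : F.AxiomII) {R N' : Subgroup S}
    (hRc : F.Hom.FullyCentralized R) (hR : p ∣ (autS R).relIndex (F.FAut R))
    (hN : F.Hom.IsConj (Subgroup.normalizer (R : Set S)) N')
    (hN' : ¬ p ∣ (autS N').relIndex (F.FAut N')) :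
    ∃ R', F.Hom.IsConj R R' ∧ F.Hom.FullyCentralized R' ∧
      Nat.card (autS R) < Nat.card (autS R') := by
  obtain ⟨β, hβF, hβ, α, hαA, hαβ⟩ := exists_pGroup_FAut_normalizer_semiconj hS hII hRc hR
  obtain ⟨e, he, heβ⟩ := exists_isIso_congr_mem_autS hS hN hN' hβ (Subgroup.zpowers_le.mpr hβF)
  obtain ⟨R', e', he', hee'⟩ := he.exists_restrict Subgroup.le_normalizer
  have hRR' : F.Hom.IsConj R R' := isConj_iff.mpr ⟨e', he'⟩
  set L := autS R ⊔ Subgroup.zpowers α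
  have hL : L ≤ (autS R').comap (MulAut.congr e').toMonoidHom := by
    refine sup_le ?_ (Subgroup.zpowers_le.mpr ?_)
    · rintro _ ⟨x, rfl⟩
      exact congr_mem_autS_of_semiconj _ hee' (k := MulAut.conj x) (fun _ => rfl)
        (congr_conj_mem_autS e x)
    · exact congr_mem_autS_of_semiconj _ hee' hαβ (heβ β (Subgroup.mem_zpowers β))
  refine ⟨R', hRR', fun Q hQ => ?_, ?_⟩
  · calc Nat.card (Subgroup.centralizer (Q : Set S))
        ≤ Nat.card (Subgroup.centralizer (R : Set S)) := hRc Q (hRR'.trans hQ)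
      _ ≤ Nat.card (Subgroup.centralizer (R' : Set S)) :=
        card_centralizer_le_of_restrict _ hee' (Subgroup.centralizer_le_normalizer _)
  · have hRL : autS R < L := lt_of_le_of_ne le_sup_left
      fun h => hαA (h ▸ Subgroup.mem_sup_right (Subgroup.mem_zpowers α))
    calc Nat.card (autS R) < Nat.card L := Subgroup.card_lt_card_of_lt hRL
      _ = Nat.card (L.map (MulAut.congr e').toMonoidHom) :=
        (Subgroup.card_map_of_injective (MulAut.congr e').injective).symm
      _ ≤ Nat.card (autS R') := Subgroup.card_le_of_le (Subgroup.map_le_iff_le_comap.mpr hL)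

theorem exists_isConj_fullyCentralized_not_dvd_relIndex (hS : IsPGroup p S)
    (hIS : F.AxiomIS p) (hII : F.AxiomII) (P : Subgroup S) :
    ∃ Q, F.Hom.IsConj P Q ∧ F.Hom.FullyCentralized Q ∧ ¬ p ∣ (autS Q).relIndex (F.FAut Q) := by
  obtain ⟨R, hPR, hRc, hRmax⟩ := exists_isConj_fullyCentralized_forall_card_autS_le (F := F) P
  by_cases hR : p ∣ (autS R).relIndex (F.FAut R)
  swap
  · exact ⟨R, hPR, hRc, hR⟩
  have hRtop : R < ⊤ := lt_top_iff_ne_top.mpr fun h => (autSIsSylow_iff hS ⊤).mp hIS (h ▸ hR)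
  have := hS.isNilpotent
  have hlt : Nat.card P < Nat.card (Subgroup.normalizer (R : Set S)) :=
    card_eq_of_isConj hPR ▸
      Subgroup.card_lt_card_of_lt (Group.normalizerCondition_of_isNilpotent R hRtop)
  obtain ⟨N', hN, -, hN'⟩ :=
    exists_isConj_fullyCentralized_not_dvd_relIndex hS hIS hII (Subgroup.normalizer (R : Set S))
  obtain ⟨R', hRR', hR'c, hlt'⟩ := exists_isConj_card_autS_lt hS hII hRc hR hN hN'
  exact absurd (hRmax R' (hPR.trans hRR') hR'c) hlt'.not_ge
termination_by Nat.card S - Nat.card P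
decreasing_by
  have := Subgroup.card_le_card_group (Subgroup.normalizer (R : Set S))
  omega

end FusionSystem

/-- For a fusion system `F` on a finite `p`-group `S`, `F` is saturated
(Axioms I and II) if and only if it satisfies Axiom I_S (the Sylow condition at `S`
itself) together with Axiom II.  In particular, Axioms I_S and II together imply
Axiom I. -/
theorem saturated_iff_axiomIS_and_axiomII
    (p : ℕ) (hp : p.Prime) (S : Type*) [Group S] [Finite S] (hS : IsPGroup p S)
    (F : FusionSystem S) :
    (F.Saturated p ↔ F.AxiomIS p ∧ F.AxiomII) ∧
      (F.AxiomIS p ∧ F.AxiomII → F.AxiomI p) := by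
  have : Fact p.Prime := ⟨hp⟩
  have hI : F.AxiomIS p ∧ F.AxiomII → F.AxiomI p := fun ⟨hIS, hII⟩ =>
    FusionSystem.axiomI_of_forall_exists_isConj hS
      (FusionSystem.exists_isConj_fullyCentralized_not_dvd_relIndex hS hIS hII)
  exact ⟨⟨fun ⟨hI', hII⟩ => ⟨(hI' ⊤ FusionSystem.fullyNormalized_top).2, hII⟩,
    fun h => ⟨hI h, h.2⟩⟩, hI⟩
end

section
/- Let G and H be finite groups and let (K,φ) and (L,ψ) be (G,H)-pairs. The number of points of the coset space (H×G)/Δ(L,ψ), with H×G acting by left translation, that are fixed by the subgroup Δ(K,φ) equals (|N_{φ,ψ}|/|L|)·|C_H(φ(K))|. In particular, this number is 0 unless (K,φ) is subconjugate to (L,ψ). -/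
/-! A coset `p Δ(L,ψ)` is fixed by `Δ(K,φ)` iff `p⁻¹` conjugates `Δ(K,φ)` into `Δ(L,ψ)`, so the
fixed cosets, each counted `|Δ(L,ψ)| = |L|` times, correspond to the set `P` of such conjugating
pairs `(y, x) ∈ H × G`. A pair `(y, x)` lies in `P` iff `x u x⁻¹ ∈ L` and
`y φ(u) y⁻¹ = ψ(x u x⁻¹)` for all `u ∈ K`; so the projection of `P` to `G` is `N_{φ,ψ}`, and over
each `x` the admissible `y` form a left coset of `C_H(φ(K))`. Hence `|P| = |N_{φ,ψ}| |C_H(φ(K))|`,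
and `P` is nonempty exactly when `(K,φ)` is subconjugate to `(L,ψ)`. -/

/-- The twisted diagonal `Δ(K,φ) = {(φ(k), k) | k ∈ K} ≤ H × G` of a `(G,H)`-pair
`(K, φ)`. -/
def twistedDiagonal {G H : Type*} [Group G] [Group H] (K : Subgroup G) (φ : K →* H) :
    Subgroup (H × G) :=
  (φ.prod K.subtype).range

/-- `(K,φ)` is subconjugate to `(L,ψ)`: `Δ(K,φ)` is conjugate in `H × G` to a subgroup
of `Δ(L,ψ)`. -/
def Subconjugate {G H : Type*} [Group G] [Group H] (K : Subgroup G) (φ : K →* H)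
    (L : Subgroup G) (ψ : L →* H) : Prop :=
  ∃ g : H × G, (twistedDiagonal K φ).map (MulAut.conj g).toMonoidHom ≤ twistedDiagonal L ψ

/-- The set `N_{φ,ψ} = {x ∈ G | xKx⁻¹ ≤ L and ∃ y ∈ H, ∀ u ∈ K, yφ(u)y⁻¹ = ψ(xux⁻¹)}`. -/
def NPairSet {G H : Type*} [Group G] [Group H] (K : Subgroup G) (φ : K →* H)
    (L : Subgroup G) (ψ : L →* H) : Set G :=
  {x | ∃ hx : ∀ u ∈ K, x * u * x⁻¹ ∈ L, ∃ y : H,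
    ∀ u : K, y * φ u * y⁻¹ = ψ ⟨x * u * x⁻¹, hx u u.2⟩}

section Conjugators

variable {Γ : Type*} [Group Γ]

def conjugatorsInto (D : Set Γ) (Δ : Subgroup Γ) : Set Γ :=
  {q | ∀ d ∈ D, q * d * q⁻¹ ∈ Δ}

theorem mem_conjugatorsInto {D : Set Γ} {Δ : Subgroup Γ} {q : Γ} :
    q ∈ conjugatorsInto D Δ ↔ ∀ d ∈ D, q * d * q⁻¹ ∈ Δ :=
  Iff.rfl

theorem mk_mem_fixed_iff_inv_mem_conjugatorsInto (D : Set Γ) (Δ : Subgroup Γ) (p : Γ) :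
    (∀ d ∈ D, d • (p : Γ ⧸ Δ) = p) ↔ p⁻¹ ∈ conjugatorsInto D Δ := by
  refine forall₂_congr fun d _ => ?_
  rw [inv_inv, MulAction.Quotient.smul_mk, eq_comm, QuotientGroup.eq, smul_eq_mul, mul_assoc]

theorem card_fixed_mul_card_eq_card_conjugatorsInto (D : Set Γ) (Δ : Subgroup Γ) :
    Nat.card {z : Γ ⧸ Δ | ∀ d ∈ D, d • z = z} * Nat.card Δ =
      Nat.card (conjugatorsInto D Δ) := by
  have hpre : QuotientGroup.mk ⁻¹' {z : Γ ⧸ Δ | ∀ d ∈ D, d • z = z} =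
      (conjugatorsInto D Δ)⁻¹ := by
    ext p
    exact mk_mem_fixed_iff_inv_mem_conjugatorsInto D Δ p
  rw [← Set.natCard_inv (conjugatorsInto D Δ), ← hpre,
    Nat.card_congr (QuotientGroup.preimageMkEquivSubgroupProdSet _ _), Nat.card_prod, mul_comm]

theorem map_conj_le_iff_mem_conjugatorsInto (D Δ : Subgroup Γ) (g : Γ) :
    D.map (MulAut.conj g).toMonoidHom ≤ Δ ↔ g ∈ conjugatorsInto D Δ := by
  rw [Subgroup.map_le_iff_le_comap]
  rfl

end Conjugators

theorem conj_eq_conj_iff_inv_mul_mem_centralizer {H : Type*} [Group H] {S : Set H} (y y' : H) :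
    (∀ s ∈ S, y' * s * y'⁻¹ = y * s * y⁻¹) ↔ y⁻¹ * y' ∈ Subgroup.centralizer S := by
  rw [Subgroup.mem_centralizer_iff]
  refine forall₂_congr fun s _ => ?_
  rw [mul_inv_eq_iff_eq_mul, mul_assoc y, mul_assoc y, ← inv_mul_eq_iff_eq_mul, ← mul_assoc,
    eq_comm, mul_assoc]

theorem card_eq_card_image_snd_mul_card {α β : Type*} [Group β] (P : Set (β × α))
    (C : Subgroup β) (hP : ∀ y y' x, (y, x) ∈ P → ((y', x) ∈ P ↔ y⁻¹ * y' ∈ C)) :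
    Nat.card P = Nat.card (Prod.snd '' P) * Nat.card C := by
  have hbase (x : Prod.snd '' P) : ∃ y, (y, x.1) ∈ P := by
    obtain ⟨_, p, hp, rfl⟩ := x
    exact ⟨p.1, hp⟩
  choose y₀ hy₀ using hbase
  rw [← Nat.card_prod]
  exact Nat.card_congr
    { toFun := fun p =>
        let x : Prod.snd '' P := ⟨p.1.2, p.1, p.2, rfl⟩
        (x, ⟨(y₀ x)⁻¹ * p.1.1, (hP _ _ _ (hy₀ x)).1 p.2⟩)
      invFun := fun xc => ⟨(y₀ xc.1 * xc.2, xc.1), (hP _ _ _ (hy₀ _)).2 (by simp)⟩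
      left_inv := fun p => by simp
      right_inv := fun xc => by simp }

section TwistedDiagonal

variable {G H : Type*} [Group G] [Group H]

theorem mem_twistedDiagonal {L : Subgroup G} {ψ : L →* H} {p : H × G} :
    p ∈ twistedDiagonal L ψ ↔ ∃ hp : p.2 ∈ L, ψ ⟨p.2, hp⟩ = p.1 := by
  constructor
  · rintro ⟨v, rfl⟩
    exact ⟨v.2, rfl⟩
  · rintro ⟨hp, h⟩
    exact ⟨⟨p.2, hp⟩, Prod.ext h rfl⟩

theorem card_twistedDiagonal (L : Subgroup G) (ψ : L →* H) :
    Nat.card (twistedDiagonal L ψ) = Nat.card L :=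
  (Nat.card_congr (Equiv.ofInjective _ fun _ _ h => Subtype.ext (congrArg Prod.snd h))).symm

variable {K L : Subgroup G} {φ : K →* H} {ψ : L →* H}

theorem forall_mem_twistedDiagonal {P : H × G → Prop} :
    (∀ d ∈ (twistedDiagonal K φ : Set (H × G)), P d) ↔ ∀ u : K, P (φ u, u) :=
  Set.forall_mem_range

theorem mk_mem_conjugatorsInto_twistedDiagonal_iff {y : H} {x : G} :
    (y, x) ∈ conjugatorsInto (twistedDiagonal K φ) (twistedDiagonal L ψ) ↔
      ∃ hx : ∀ u ∈ K, x * u * x⁻¹ ∈ L, ∀ u : K, y * φ u * y⁻¹ = ψ ⟨x * u * x⁻¹, hx u u.2⟩ := by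
  rw [mem_conjugatorsInto, forall_mem_twistedDiagonal]
  simp only [Prod.inv_mk, Prod.mk_mul_mk, mem_twistedDiagonal]
  exact ⟨fun h => ⟨fun u hu => (h ⟨u, hu⟩).1, fun u => (h u).2.symm⟩,
    fun ⟨hx, h⟩ u => ⟨hx u u.2, (h u).symm⟩⟩

theorem image_snd_conjugatorsInto_twistedDiagonal :
    Prod.snd '' conjugatorsInto (twistedDiagonal K φ) (twistedDiagonal L ψ) =
      NPairSet K φ L ψ := by
  ext x
  simp only [Set.mem_image, Prod.exists, exists_eq_right,
    mk_mem_conjugatorsInto_twistedDiagonal_iff]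
  exact exists_comm

theorem mk_mem_conjugatorsInto_twistedDiagonal_iff_of_mem {y y' : H} {x : G}
    (h : (y, x) ∈ conjugatorsInto (twistedDiagonal K φ) (twistedDiagonal L ψ)) :
    (y', x) ∈ conjugatorsInto (twistedDiagonal K φ) (twistedDiagonal L ψ) ↔
      y⁻¹ * y' ∈ Subgroup.centralizer ((φ.range : Subgroup H) : Set H) := by
  obtain ⟨hx, hy⟩ := mk_mem_conjugatorsInto_twistedDiagonal_iff.1 h
  rw [mk_mem_conjugatorsInto_twistedDiagonal_iff, exists_prop_of_true hx,
    ← conj_eq_conj_iff_inv_mul_mem_centralizer, MonoidHom.coe_range, Set.forall_mem_range]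
  simp only [hy]

end TwistedDiagonal

theorem card_fixedPoints_of_twistedDiagonal_general
    (G H : Type*) [Group G] [Group H]
    (K L : Subgroup G) (φ : K →* H) (ψ : L →* H) :
    Nat.card {z : (H × G) ⧸ twistedDiagonal L ψ |
        ∀ d ∈ twistedDiagonal K φ, d • z = z} * Nat.card L =
      Nat.card (NPairSet K φ L ψ) *
        Nat.card (Subgroup.centralizer ((φ.range : Subgroup H) : Set H)) ∧
    (¬ Subconjugate K φ L ψ →
      Nat.card {z : (H × G) ⧸ twistedDiagonal L ψ |
        ∀ d ∈ twistedDiagonal K φ, d • z = z} = 0) := by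
  constructor
  · rw [← card_twistedDiagonal L ψ]
    refine (card_fixed_mul_card_eq_card_conjugatorsInto
      (twistedDiagonal K φ : Set (H × G)) _).trans ?_
    rw [card_eq_card_image_snd_mul_card _ _
        fun _ _ _ => mk_mem_conjugatorsInto_twistedDiagonal_iff_of_mem,
      image_snd_conjugatorsInto_twistedDiagonal]
  · intro hK
    refine Nat.card_eq_zero.2 (Or.inl ⟨fun ⟨z, hz⟩ => hK ?_⟩)
    obtain ⟨p, rfl⟩ := QuotientGroup.mk_surjective z
    exact ⟨p⁻¹, (map_conj_le_iff_mem_conjugatorsInto _ _ _).2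
      ((mk_mem_fixed_iff_inv_mem_conjugatorsInto _ _ p).1 hz)⟩

/-- For finite groups `G, H` and `(G,H)`-pairs `(K,φ)`, `(L,ψ)`, the
number of points of the coset space `(H×G)/Δ(L,ψ)` fixed by the left-translation action
of `Δ(K,φ)` equals `(|N_{φ,ψ}|/|L|)·|C_H(φ(K))|` (stated multiplied through by `|L|` to
avoid division); in particular this number is `0` unless `(K,φ)` is subconjugate to
`(L,ψ)`. -/
theorem card_fixedPoints_of_twistedDiagonal
    (G H : Type*) [Group G] [Group H] [Finite G] [Finite H]
    (K L : Subgroup G) (φ : K →* H) (ψ : L →* H) :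
    Nat.card {z : (H × G) ⧸ twistedDiagonal L ψ |
        ∀ d ∈ twistedDiagonal K φ, d • z = z} * Nat.card L =
      Nat.card (NPairSet K φ L ψ) *
        Nat.card (Subgroup.centralizer ((φ.range : Subgroup H) : Set H)) ∧
    (¬ Subconjugate K φ L ψ →
      Nat.card {z : (H × G) ⧸ twistedDiagonal L ψ |
        ∀ d ∈ twistedDiagonal K φ, d • z = z} = 0) :=
  card_fixedPoints_of_twistedDiagonal_general G H K L φ ψ
end

section
/- Let p be a prime, S a finite p-group, X a finite bifree (S,S)-biset, and P ≤ S. Then: (i) for every injective homomorphism φ: P → S, |C_S(φ(P))| divides |X^{(P,φ)}|; and (ii) the sum over a set of representatives [φ] of the S-conjugacy classes of injective homomorphisms φ: P → S (where φ ∼ c_s∘φ for s ∈ S) of the integers |X^{(P,φ)}|/|C_S(φ(P))| is congruent to |X|/|S| modulo p. -/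
/-! ## Bisets -/

/-- A `(G,H)`-biset structure on a type `X`: a left `H`-action and a right `G`-action
that commute with each other. -/
structure BisetAction (G H : Type*) [Group G] [Group H] (X : Type*) where
  /-- the left `H`-action -/
  smul : H → X → X
  /-- the right `G`-action -/
  rmul : X → G → X
  one_smul : ∀ x, smul 1 x = x
  mul_smul : ∀ h₁ h₂ x, smul (h₁ * h₂) x = smul h₁ (smul h₂ x)
  rmul_one : ∀ x, rmul x 1 = x
  rmul_mul : ∀ x g₁ g₂, rmul x (g₁ * g₂) = rmul (rmul x g₁) g₂
  smul_rmul : ∀ h x g, rmul (smul h x) g = smul h (rmul x g)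

namespace BisetAction

variable {G H K : Type*} [Group G] [Group H] [Group K] {X Y Z : Type*}

lemma smul_smul (A : BisetAction G H X) (h₁ h₂ : H) (x : X) :
    A.smul h₁ (A.smul h₂ x) = A.smul (h₁ * h₂) x := (A.mul_smul h₁ h₂ x).symm

lemma rmul_rmul (A : BisetAction G H X) (x : X) (g₁ g₂ : G) :
    A.rmul (A.rmul x g₁) g₂ = A.rmul x (g₁ * g₂) := (A.rmul_mul x g₁ g₂).symm

/-- The biset is left-free. -/
def LeftFree (A : BisetAction G H X) : Prop := ∀ (h : H) (x : X), A.smul h x = x → h = 1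

/-- The biset is right-free. -/
def RightFree (A : BisetAction G H X) : Prop := ∀ (g : G) (x : X), A.rmul x g = x → g = 1

/-- The biset is bifree: both actions are free. -/
def Bifree (A : BisetAction G H X) : Prop := A.LeftFree ∧ A.RightFree

/-- The fixed-point set `X^{(P,φ)} = {x | x·u = φ(u)·x for all u ∈ P}`. -/
def Fix (A : BisetAction G H X) (P : Subgroup G) (φ : P →* H) : Set X :=
  {x | ∀ u : P, A.rmul x u = A.smul (φ u) x}

/-- The opposite biset: same underlying set, with the two actions reversed
(`g·x·h` in `op A` is `h⁻¹·x·g⁻¹` in `A`). -/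
def op (A : BisetAction G H X) : BisetAction H G X where
  smul g x := A.rmul x g⁻¹
  rmul x h := A.smul h⁻¹ x
  one_smul x := by simpa using A.rmul_one x
  mul_smul g₁ g₂ x := by rw [mul_inv_rev, A.rmul_mul]
  rmul_one x := by simpa using A.one_smul x
  rmul_mul x h₁ h₂ := by rw [mul_inv_rev, A.mul_smul]
  smul_rmul g x h := (A.smul_rmul h⁻¹ x g⁻¹).symm

/-- The setoid of left `H`-orbits. -/
def leftOrbitSetoid (A : BisetAction G H X) : Setoid X where
  r x y := ∃ h : H, y = A.smul h x
  iseqv := by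
    refine ⟨fun x => ⟨1, (A.one_smul x).symm⟩, ?_, ?_⟩
    · rintro x y ⟨h, rfl⟩
      exact ⟨h⁻¹, by rw [A.smul_smul, inv_mul_cancel, A.one_smul]⟩
    · rintro x y z ⟨h₁, rfl⟩ ⟨h₂, rfl⟩
      exact ⟨h₂ * h₁, A.smul_smul h₂ h₁ x⟩

/-- The set of left `H`-orbits of the biset. -/
def leftOrbits (A : BisetAction G H X) : Type _ := Quotient (A.leftOrbitSetoid)

/-- Restricting the right action along a homomorphism `φ : P →* G`. -/
def restrictRight (A : BisetAction G H X) {P : Type*} [Group P] (φ : P →* G) :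
    BisetAction P H X where
  smul := A.smul
  rmul x u := A.rmul x (φ u)
  one_smul := A.one_smul
  mul_smul := A.mul_smul
  rmul_one x := by rw [map_one, A.rmul_one]
  rmul_mul x u₁ u₂ := by rw [map_mul, A.rmul_mul]
  smul_rmul h x u := A.smul_rmul h x (φ u)

/-- Restricting the left action along a homomorphism `φ : P →* H`. -/
def restrictLeft (A : BisetAction G H X) {P : Type*} [Group P] (φ : P →* H) :
    BisetAction G P X where
  smul u x := A.smul (φ u) x
  rmul := A.rmul
  one_smul x := by rw [map_one, A.one_smul]
  mul_smul u₁ u₂ x := by rw [map_mul, A.mul_smul]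
  rmul_one := A.rmul_one
  rmul_mul := A.rmul_mul
  smul_rmul u x g := A.smul_rmul (φ u) x g

end BisetAction

/-- An isomorphism of `(G,H)`-bisets: an equivalence of underlying sets commuting with
both actions. -/
structure BisetIso {G H : Type*} [Group G] [Group H] {X Y : Type*}
    (A : BisetAction G H X) (B : BisetAction G H Y) extends X ≃ Y where
  map_smul : ∀ (h : H) (x : X), toEquiv (A.smul h x) = B.smul h (toEquiv x)
  map_rmul : ∀ (x : X) (g : G), toEquiv (A.rmul x g) = B.rmul (toEquiv x) g

/-- Two homomorphisms `φ ψ : P →* S` are `S`-conjugate if `ψ = c_s ∘ φ` for some `s ∈ S`. -/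
def HomSConj {S : Type*} [Group S] {P : Subgroup S} (φ ψ : P →* S) : Prop :=
  ∃ s : S, ∀ u : P, ψ u = s * φ u * s⁻¹

/-
The centralizer `C_S(φ(P))` acts freely on `X^{(P,φ)}` by left multiplication, which gives (i).
For (ii), `P` acts through the right action on the set `S\X` of the `|X|/|S|` left orbits, so
`|X|/|S|` is congruent mod `p` to the number of `P`-fixed orbits. An orbit `Sx` is `P`-fixed
exactly when `x·u = φ(u)·x` for some map `φ : P → S`; left freeness makes `φ` a homomorphism and
right freeness makes it injective. Replacing `x` by `s·x` replaces `φ` by `c_s ∘ φ`, so each fixed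
orbit meets `X^{(P,φ)}` for exactly one `φ ∈ R`, and there in a single `C_S(φ(P))`-orbit, of size
`|C_S(φ(P))|`.
-/

open MulAction

lemma MulAction.card_eq_card_orbitRel_quotient_mul_card {C Y : Type*} [Group C] [MulAction C Y]
    (hfree : ∀ (c : C) (y : Y), c • y = y → c = 1) :
    Nat.card Y = Nat.card (orbitRel.Quotient C Y) * Nat.card C :=
  (Nat.card_congr (selfEquivOrbitsQuotientProd fun y =>
    (Subgroup.eq_bot_iff_forall _).2 fun c hc => hfree c y hc)).trans (Nat.card_prod _ _)

namespace BisetAction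

variable {G H X : Type*} [Group G] [Group H] (A : BisetAction G H X)

section LeftOrbits

def leftOrbit (x : X) : A.leftOrbits := Quotient.mk _ x

lemma leftOrbit_eq_leftOrbit_iff {x y : X} :
    A.leftOrbit x = A.leftOrbit y ↔ ∃ h, y = A.smul h x :=
  Quotient.eq

lemma leftOrbit_smul (h : H) (x : X) : A.leftOrbit (A.smul h x) = A.leftOrbit x :=
  ((A.leftOrbit_eq_leftOrbit_iff).2 ⟨h, rfl⟩).symm

lemma leftOrbit_surjective : Function.Surjective A.leftOrbit :=
  Quotient.mk_surjective

instance [Finite X] : Finite A.leftOrbits :=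
  Quotient.finite _

instance : MulAction G A.leftOrbits where
  smul g := Quotient.map (fun x => A.rmul x g⁻¹) fun _ _ ⟨h, hy⟩ => ⟨h, by rw [hy, A.smul_rmul]⟩
  one_smul q := Quotient.inductionOn q fun x =>
    congrArg A.leftOrbit (by simp only [inv_one, A.rmul_one])
  mul_smul g₁ g₂ q := Quotient.inductionOn q fun x =>
    congrArg A.leftOrbit (by simp only [mul_inv_rev, A.rmul_mul])

lemma smul_leftOrbit (g : G) (x : X) : g • A.leftOrbit x = A.leftOrbit (A.rmul x g⁻¹) :=
  rfl

variable {A}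

lemma LeftFree.card_eq_card_leftOrbits_mul_card (hA : A.LeftFree) :
    Nat.card X = Nat.card A.leftOrbits * Nat.card H := by
  let _ : MulAction H X := { smul := A.smul, one_smul := A.one_smul, mul_smul := A.mul_smul }
  have : A.leftOrbitSetoid = orbitRel H X := Setoid.ext fun x y =>
    ⟨fun ⟨h, hy⟩ => ⟨h⁻¹, by subst hy; exact inv_smul_smul h x⟩,
      fun ⟨h, hx⟩ => ⟨h⁻¹, by subst hx; exact (inv_smul_smul h y).symm⟩⟩
  rw [leftOrbits, this]
  exact card_eq_card_orbitRel_quotient_mul_card hA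

end LeftOrbits

section Fix

variable {P : Subgroup G} {φ ψ : P →* H} {x : X}

lemma smul_mem_fix {s : H} (hx : x ∈ A.Fix P φ) (hψ : ∀ u, ψ u = s * φ u * s⁻¹) :
    A.smul s x ∈ A.Fix P ψ := fun u => by
  rw [A.smul_rmul, hx u, A.smul_smul, A.smul_smul, hψ u, inv_mul_cancel_right]

instance : MulAction (Subgroup.centralizer (φ.range : Set H)) (A.Fix P φ) where
  smul c x := ⟨A.smul c x, A.smul_mem_fix x.2 fun u =>
    by rw [← Subgroup.mem_centralizer_iff.1 c.2 _ ⟨u, rfl⟩, mul_inv_cancel_right]⟩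
  one_smul x := Subtype.ext (A.one_smul x)
  mul_smul c d x := Subtype.ext (A.mul_smul c d x)

lemma leftOrbit_mem_fixedPoints (hx : x ∈ A.Fix P φ) :
    A.leftOrbit x ∈ fixedPoints P A.leftOrbits := fun u => by
  rw [Subgroup.smul_def, smul_leftOrbit, ← Subgroup.coe_inv, hx u⁻¹, leftOrbit_smul]

variable (P) in
abbrev fixOrbits (φ : P →* H) : Type _ :=
  orbitRel.Quotient (Subgroup.centralizer (φ.range : Set H)) (A.Fix P φ)

def fixOrbitToLeftOrbit (φ : P →* H) : A.fixOrbits P φ → fixedPoints P A.leftOrbits :=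
  Quotient.lift (fun x => ⟨A.leftOrbit x, A.leftOrbit_mem_fixedPoints x.2⟩) fun _ y ⟨c, hc⟩ =>
    Subtype.ext <| by rw [← hc]; exact A.leftOrbit_smul c y

variable {A}

lemma LeftFree.eq_of_smul_eq_smul (hA : A.LeftFree) {h₁ h₂ : H}
    (h : A.smul h₁ x = A.smul h₂ x) : h₁ = h₂ := by
  refine (inv_mul_eq_one.mp (hA _ x ?_)).symm
  rw [A.mul_smul, h, A.smul_smul, inv_mul_cancel, A.one_smul]

lemma LeftFree.conj_of_smul_mem_fix (hA : A.LeftFree) {s : H} (hx : x ∈ A.Fix P φ)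
    (hsx : A.smul s x ∈ A.Fix P ψ) (u : P) : ψ u = s * φ u * s⁻¹ := by
  have : ψ u * s = s * φ u := hA.eq_of_smul_eq_smul <| by
    rw [← A.smul_smul, ← hsx u, A.smul_rmul, hx u, A.smul_smul]
  rw [← this, mul_inv_cancel_right]

lemma RightFree.injective_of_mem_fix (hA : A.RightFree) (hx : x ∈ A.Fix P φ) :
    Function.Injective φ :=
  (injective_iff_map_eq_one φ).2 fun u hu =>
    Subtype.ext <| hA u x <| by rw [hx u, hu, A.one_smul]

lemma LeftFree.card_fix_eq_card_orbitRel_quotient_mul_card (hA : A.LeftFree) :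
    Nat.card (A.Fix P φ) =
      Nat.card (A.fixOrbits P φ) * Nat.card (Subgroup.centralizer (φ.range : Set H)) :=
  card_eq_card_orbitRel_quotient_mul_card fun c x hc =>
    Subtype.ext (hA c x (congrArg Subtype.val hc))

lemma LeftFree.exists_mem_fix_of_leftOrbit_mem_fixedPoints (hA : A.LeftFree)
    (hx : A.leftOrbit x ∈ fixedPoints P A.leftOrbits) : ∃ φ : P →* H, x ∈ A.Fix P φ := by
  have : ∀ u : P, ∃ h, A.rmul x u = A.smul h x := fun u => by
    have := hx u⁻¹
    rw [Subgroup.smul_def, smul_leftOrbit, Subgroup.coe_inv, inv_inv] at this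
    exact (A.leftOrbit_eq_leftOrbit_iff).1 this.symm
  choose σ hσ using this
  refine ⟨MonoidHom.mk' σ fun u v => hA.eq_of_smul_eq_smul (x := x) ?_, hσ⟩
  rw [← hσ (u * v), ← A.smul_smul, ← hσ v, ← A.smul_rmul, ← hσ u, Subgroup.coe_mul, A.rmul_mul]

lemma LeftFree.fixOrbitToLeftOrbit_injective (hA : A.LeftFree) :
    Function.Injective (A.fixOrbitToLeftOrbit φ) := by
  rintro ⟨x⟩ ⟨y⟩ hxy
  obtain ⟨s, hs⟩ := (A.leftOrbit_eq_leftOrbit_iff).1 (congrArg Subtype.val hxy)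
  have hsx : A.smul s x ∈ A.Fix P φ := hs ▸ y.2
  have hs' : s ∈ Subgroup.centralizer (φ.range : Set H) := Subgroup.mem_centralizer_iff.2 <| by
    rintro _ ⟨u, rfl⟩
    exact eq_mul_inv_iff_mul_eq.1 (hA.conj_of_smul_mem_fix x.2 hsx u)
  exact (Quotient.sound (show y ∈ orbit _ x from ⟨⟨s, hs'⟩, Subtype.ext hs.symm⟩)).symm

end Fix

section Representatives

variable {S : Type*} [Group S] {A : BisetAction S S X} {P : Subgroup S}

lemma LeftFree.homSConj_of_fixOrbitToLeftOrbit_eq (hA : A.LeftFree) {φ ψ : P →* S}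
    {q : A.fixOrbits P φ} {q' : A.fixOrbits P ψ}
    (h : (A.fixOrbitToLeftOrbit φ q : A.leftOrbits) = A.fixOrbitToLeftOrbit ψ q') :
    HomSConj φ ψ := by
  rcases q with ⟨x⟩
  rcases q' with ⟨y⟩
  obtain ⟨s, hs⟩ := (A.leftOrbit_eq_leftOrbit_iff).1 h
  exact ⟨s, hA.conj_of_smul_mem_fix x.2 (hs ▸ y.2)⟩

lemma Bifree.card_fixedPoints_leftOrbits_eq_sum (hA : A.Bifree) [Finite X] (R : Finset (P →* S))
    (hcover : ∀ φ : P →* S, Function.Injective φ → ∃ ψ ∈ R, HomSConj φ ψ)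
    (hdistinct : ∀ φ ∈ R, ∀ ψ ∈ R, HomSConj φ ψ → φ = ψ) :
    Nat.card (fixedPoints P A.leftOrbits) = ∑ φ ∈ R, Nat.card (A.fixOrbits P φ) := by
  have hbij : Function.Bijective fun z : Σ φ : R, A.fixOrbits P φ.1 =>
      A.fixOrbitToLeftOrbit z.1.1 z.2 := by
    constructor
    · rintro ⟨⟨φ, hφ⟩, q⟩ ⟨⟨ψ, hψ⟩, q'⟩ hqq'
      obtain rfl : φ = ψ :=
        hdistinct φ hφ ψ hψ (hA.1.homSConj_of_fixOrbitToLeftOrbit_eq (congrArg Subtype.val hqq'))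
      exact congrArg (Sigma.mk _) (hA.1.fixOrbitToLeftOrbit_injective hqq')
    · rintro ⟨q, hq⟩
      obtain ⟨x, rfl⟩ := A.leftOrbit_surjective q
      obtain ⟨φ, hx⟩ := hA.1.exists_mem_fix_of_leftOrbit_mem_fixedPoints hq
      obtain ⟨ψ, hψ, s, hs⟩ := hcover φ (hA.2.injective_of_mem_fix hx)
      exact ⟨⟨⟨ψ, hψ⟩, Quotient.mk _ ⟨A.smul s x, A.smul_mem_fix hx hs⟩⟩,
        Subtype.ext (A.leftOrbit_smul s x)⟩
  rw [← Nat.card_eq_of_bijective _ hbij, Nat.card_sigma]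
  exact Finset.sum_coe_sort R fun φ => Nat.card (A.fixOrbits P φ)

end Representatives

end BisetAction

/-- Let `S` be a finite `p`-group, `X` a finite bifree `(S,S)`-biset and
`P ≤ S`.  Then (i) `|C_S(φ(P))|` divides `|X^{(P,φ)}|` for every injective `φ : P → S`,
and (ii) for any set `R` of representatives of the `S`-conjugacy classes of injective
homomorphisms `P → S`, `∑_{φ ∈ R} |X^{(P,φ)}|/|C_S(φ(P))| ≡ |X|/|S| (mod p)`. -/
theorem fixedPoint_congruence_pointwise
    (p : ℕ) (hp : p.Prime) (S : Type*) [Group S] [Finite S] (hS : IsPGroup p S)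
    (X : Type*) [Finite X] (A : BisetAction S S X) (hA : A.Bifree) (P : Subgroup S) :
    (∀ φ : P →* S, Function.Injective φ →
      Nat.card (Subgroup.centralizer ((φ.range : Subgroup S) : Set S)) ∣
        Nat.card (A.Fix P φ)) ∧
    (∀ R : Finset (P →* S),
      (∀ φ ∈ R, Function.Injective φ) →
      (∀ φ : P →* S, Function.Injective φ → ∃ ψ ∈ R, HomSConj φ ψ) →
      (∀ φ ∈ R, ∀ ψ ∈ R, HomSConj φ ψ → φ = ψ) →
      (∑ φ ∈ R, Nat.card (A.Fix P φ) /
          Nat.card (Subgroup.centralizer ((φ.range : Subgroup S) : Set S))) ≡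
        Nat.card X / Nat.card S [MOD p]) := by
  have : Fact p.Prime := ⟨hp⟩
  have hcard := fun φ : P →* S => hA.1.card_fix_eq_card_orbitRel_quotient_mul_card (φ := φ)
  refine ⟨fun φ _ => Dvd.intro_left _ (hcard φ).symm, fun R _ hcover hdistinct => ?_⟩
  have hsum : ∑ φ ∈ R, Nat.card (A.Fix P φ) / Nat.card (Subgroup.centralizer (φ.range : Set S)) =
      Nat.card (fixedPoints P A.leftOrbits) := by
    rw [hA.card_fixedPoints_leftOrbits_eq_sum R hcover hdistinct]
    exact Finset.sum_congr rfl fun φ _ => by rw [hcard φ, Nat.mul_div_cancel _ Nat.card_pos]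
  rw [hsum, hA.1.card_eq_card_leftOrbits_mul_card, Nat.mul_div_cancel _ Nat.card_pos]
  exact ((hS.to_subgroup P).card_modEq_card_fixedPoints A.leftOrbits).symm
end

section
/- Let p be a prime, S a finite p-group, X a finite bifree (S,S)-biset, and P ≤ S. Then: (i) for every subgroup Q ≤ S isomorphic to P (as an abstract group), |N_S(Q)| divides the sum over all isomorphisms φ: P → Q of |X^{(P,φ)}| (where X^{(P,φ)} is taken with φ viewed as a map into S); and (ii) the sum over a set of representatives [Q] of the S-conjugacy classes of subgroups Q ≤ S isomorphic to P of the integers ( Σ_{φ: P → Q isomorphism} |X^{(P,φ)}| ) / |N_S(Q)| is congruent to |X|/|S| modulo p. -/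
/-- Finitely many homomorphisms between finite monoids. -/
instance monoidHomFinite {M N : Type*} [MulOneClass M] [MulOneClass N] [Finite M]
    [Finite N] : Finite (M →* N) :=
  Finite.of_injective (fun f => (f : M → N)) DFunLike.coe_injective

/-- Two subgroups `Q Q' ≤ S` are `S`-conjugate. -/
def SubSConj {S : Type*} [Group S] (Q Q' : Subgroup S) : Prop :=
  ∃ s : S, Q.map (MulAut.conj s).toMonoidHom = Q'

/-! `H` acts freely on the pairs `(φ, x)`, `φ : P ↪ H`, `x ∈ X^{(P,φ)}`, by
`c · (φ, x) = (c φ c⁻¹, c x)`, and its orbits are the `P`-fixed points of `H\X`: a fixed orbit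
`H x` determines `φ` through `x u = φ(u) x`, which is a homomorphism because `H` acts freely and
injective because `G` does. The normalizer of `Q` acts freely on the pairs with `φ(P) = Q`,
which gives (i). Counting all pairs by the conjugacy class of `φ(P)` gives
`∑_[Q] |pairs with φ(P) = Q| / |N(Q)| = |(H\X)^P|`, and `|(H\X)^P| ≡ |H\X| = |X|/|H| (mod p)`
since `P` is a `p`-group. -/

namespace MulAction

variable {G α β : Type*} [Group G] [MulAction G α] [MulAction G β]

theorem card_eq_card_mul_card_of_free {γ : Type*} (hfree : ∀ (g : G) (a : α), g • a = a → g = 1)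
    (q : α → γ) (hq : Function.Surjective q) (hfib : ∀ a a', q a = q a' ↔ a ∈ orbit G a') :
    Nat.card α = Nat.card γ * Nat.card G := by
  have hstab (a : α) : stabilizer G a = ⊥ :=
    (Subgroup.eq_bot_iff_forall _).2 fun g hg => hfree g a hg
  have hrel : orbitRel G α = Setoid.ker q := Setoid.ext fun a a' => (hfib a a').symm
  rw [Nat.card_congr (selfEquivOrbitsQuotientProd hstab), Nat.card_prod,
    Nat.card_congr ((Quotient.congrRight fun a a' => by rw [hrel]).trans
      (Setoid.quotientKerEquivOfSurjective q hq))]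

theorem card_dvd_card_of_free (hfree : ∀ (g : G) (a : α), g • a = a → g = 1) :
    Nat.card G ∣ Nat.card α := by
  have hstab (a : α) : stabilizer G a = ⊥ :=
    (Subgroup.eq_bot_iff_forall _).2 fun g hg => hfree g a hg
  rw [Nat.card_congr (selfEquivOrbitsQuotientProd hstab), Nat.card_prod]
  exact dvd_mul_left _ _

variable {f : α → β}

theorem card_stabilizer_dvd_card_fiber (hf : ∀ (g : G) (a : α), f (g • a) = g • f a)
    (hfree : ∀ (g : G) (a : α), g • a = a → g = 1) (b : β) :
    Nat.card (stabilizer G b) ∣ Nat.card {a // f a = b} := by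
  let : MulAction (stabilizer G b) {a // f a = b} :=
    { smul g a := ⟨(g : G) • (a : α), by rw [hf, a.2]; exact g.2⟩
      one_smul a := Subtype.ext (one_smul G (a : α))
      mul_smul g g' a := Subtype.ext (mul_smul (g : G) g' (a : α)) }
  exact card_dvd_card_of_free fun g a h =>
    Subtype.ext (hfree g a (congrArg Subtype.val h))

theorem card_fiber_smul (hf : ∀ (g : G) (a : α), f (g • a) = g • f a) (g : G) (b : β) :
    Nat.card {a // f a = g • b} = Nat.card {a // f a = b} :=
  Nat.card_congr ((MulAction.toPerm g).subtypeEquiv fun a => by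
    simp [toPerm_apply, hf, smul_left_cancel_iff]).symm

theorem card_eq_card_mul_sum_card_fiber_div [Finite G] [Finite α] [Finite β]
    (hf : ∀ (g : G) (a : α), f (g • a) = g • f a) (hfree : ∀ (g : G) (a : α), g • a = a → g = 1)
    (R : Finset β) (hcover : ∀ a, ∃ b ∈ R, f a ∈ orbit G b)
    (hdisj : ∀ b ∈ R, ∀ b' ∈ R, b' ∈ orbit G b → b = b') :
    Nat.card α = Nat.card G * ∑ b ∈ R, Nat.card {a // f a = b} / Nat.card (stabilizer G b) := by
  classical
  have := Fintype.ofFinite β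
  have hdisj' : (R : Set β).PairwiseDisjoint fun b => (orbit G b).toFinset := by
    intro b hb b' hb' hne
    refine Finset.disjoint_left.2 fun c hc hc' => hne (hdisj b hb b' hb' ?_)
    rw [Set.mem_toFinset] at hc hc'
    rw [← orbit_eq_iff.2 hc, orbit_eq_iff.2 hc']
    exact mem_orbit_self b'
  have horbit (b : β) : ∑ c ∈ (orbit G b).toFinset, Nat.card {a // f a = c} =
      Nat.card G * (Nat.card {a // f a = b} / Nat.card (stabilizer G b)) := by
    have hconst : ∀ c ∈ (orbit G b).toFinset,
        Nat.card {a // f a = c} = Nat.card {a // f a = b} := by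
      intro c hc
      obtain ⟨g, rfl⟩ := Set.mem_toFinset.1 hc
      exact card_fiber_smul hf g b
    obtain ⟨k, hk⟩ := card_stabilizer_dvd_card_fiber hf hfree b
    rw [Finset.sum_congr rfl hconst, Finset.sum_const, smul_eq_mul, Set.toFinset_card,
      ← Nat.card_eq_fintype_card, hk, Nat.mul_div_cancel_left k Nat.card_pos, ← mul_assoc,
      ← Nat.card_prod, Nat.card_congr (orbitProdStabilizerEquivGroup G b)]
  calc Nat.card α = ∑ c, Nat.card {a // f a = c} := by
        rw [← Nat.card_congr (Equiv.sigmaFiberEquiv f), Nat.card_sigma]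
    _ = ∑ b ∈ R, ∑ c ∈ (orbit G b).toFinset, Nat.card {a // f a = c} := by
        rw [← Finset.sum_biUnion hdisj']
        refine (Finset.sum_subset (Finset.subset_univ _) fun c _ hc => ?_).symm
        refine Nat.card_eq_zero.2 (Or.inl ⟨fun ⟨a, ha⟩ => hc ?_⟩)
        obtain ⟨b, hb, hab⟩ := hcover a
        exact Finset.mem_biUnion.2 ⟨b, hb, Set.mem_toFinset.2 (ha ▸ hab)⟩
    _ = Nat.card G * ∑ b ∈ R, Nat.card {a // f a = b} / Nat.card (stabilizer G b) := by
        rw [Finset.mul_sum]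
        exact Finset.sum_congr rfl fun b _ => horbit b

end MulAction

namespace Subgroup

open MulAction Pointwise

variable {H : Type*} [Group H]

lemma card_stabilizer_conjAct (Q : Subgroup H) :
    Nat.card (stabilizer (ConjAct H) Q) = Nat.card (normalizer (Q : Set H)) :=
  Nat.card_congr <| ConjAct.ofConjAct.toEquiv.subtypeEquiv fun _ =>
    mem_stabilizer_iff.trans conjAct_pointwise_smul_iff

lemma mem_orbit_conjAct_iff {Q Q' : Subgroup H} :
    Q' ∈ orbit (ConjAct H) Q ↔ SubSConj Q Q' :=
  ⟨fun ⟨c, hc⟩ => ⟨ConjAct.ofConjAct c, hc⟩, fun ⟨s, hs⟩ => ⟨ConjAct.toConjAct s, hs⟩⟩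

end Subgroup

namespace BisetAction

open MulAction Pointwise

variable {G H X : Type*} [Group G] [Group H] (A : BisetAction G H X)

lemma smul_right_cancel (hA : A.LeftFree) {h h' : H} {x : X} (hx : A.smul h x = A.smul h' x) :
    h = h' := by
  refine (inv_mul_eq_one.1 (hA _ x ?_)).symm
  rw [A.mul_smul, hx, A.smul_smul, inv_mul_cancel, A.one_smul]

instance inst_s9 : MulAction G A.leftOrbits where
  smul g := Quotient.map' (fun x => A.rmul x g⁻¹) fun x y ⟨h, hxy⟩ => ⟨h, by rw [hxy, A.smul_rmul]⟩
  one_smul ω := Quotient.inductionOn' ω fun x =>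
    congrArg Quotient.mk'' (show A.rmul x 1⁻¹ = x by rw [inv_one, A.rmul_one])
  mul_smul g g' ω := Quotient.inductionOn' ω fun x =>
    congrArg Quotient.mk'' (show A.rmul x (g * g')⁻¹ = A.rmul (A.rmul x g'⁻¹) g⁻¹ by
      rw [mul_inv_rev, A.rmul_mul])

instance inst_s9_2 [Finite X] : Finite A.leftOrbits :=
  Quotient.finite _

lemma mk_mem_fixedPoints_iff {P : Subgroup G} {x : X} :
    (Quotient.mk _ x : A.leftOrbits) ∈ fixedPoints P A.leftOrbits ↔
      ∀ u : P, ∃ h : H, A.rmul x u = A.smul h x := by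
  refine ⟨fun hx u => ?_, fun hx u => ?_⟩
  · obtain ⟨h, hh⟩ := Quotient.exact (hx u⁻¹)
    simp only [InvMemClass.coe_inv, inv_inv] at hh
    refine ⟨h⁻¹, ?_⟩
    conv_rhs => rw [hh]
    rw [A.smul_smul, inv_mul_cancel, A.one_smul]
  · obtain ⟨h, hh⟩ := hx u⁻¹
    refine Quotient.sound ⟨h⁻¹, ?_⟩
    show x = A.smul h⁻¹ (A.rmul x (u⁻¹ : P))
    rw [hh, A.smul_smul, inv_mul_cancel, A.one_smul]

def FixPairs (P : Subgroup G) : Type _ :=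
  {t : (P →* H) × X // Function.Injective t.1 ∧ t.2 ∈ A.Fix P t.1}

instance [Finite G] [Finite H] [Finite X] (P : Subgroup G) : Finite (A.FixPairs P) :=
  Subtype.finite

variable {A} in
lemma FixPairs.ext {P : Subgroup G} {t t' : A.FixPairs P} (hφ : t.1.1 = t'.1.1)
    (hx : t.1.2 = t'.1.2) : t = t' :=
  Subtype.ext (Prod.ext hφ hx)

instance (P : Subgroup G) : MulAction (ConjAct H) (A.FixPairs P) where
  smul c t :=
    ⟨((MulDistribMulAction.toMonoidHom H c).comp t.1.1, A.smul (ConjAct.ofConjAct c) t.1.2),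
      (MulAction.injective c).comp t.2.1, fun u => by
        rw [A.smul_rmul, t.2.2 u, A.smul_smul, A.smul_smul, MonoidHom.comp_apply,
          MulDistribMulAction.toMonoidHom_apply, ConjAct.smul_def, inv_mul_cancel_right]⟩
  one_smul t :=
    FixPairs.ext (MonoidHom.ext fun _ => _root_.one_smul (ConjAct H) _) (A.one_smul _)
  mul_smul c c' t :=
    FixPairs.ext (MonoidHom.ext fun _ => (_root_.smul_smul c c' _).symm) (A.mul_smul _ _ _)

variable {A} {P : Subgroup G}

lemma FixPairs.range_smul (c : ConjAct H) (t : A.FixPairs P) :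
    (c • t).1.1.range = c • t.1.1.range :=
  MonoidHom.range_comp _ _

lemma FixPairs.eq_one_of_smul_eq (hA : A.LeftFree) {c : ConjAct H} {t : A.FixPairs P}
    (h : c • t = t) : c = 1 :=
  hA _ _ (congrArg (fun t : A.FixPairs P => t.1.2) h)

lemma exists_injective_mem_fix (hA : A.Bifree) {x : X}
    (hx : ∀ u : P, ∃ h : H, A.rmul x u = A.smul h x) :
    ∃ φ : P →* H, Function.Injective φ ∧ x ∈ A.Fix P φ := by
  choose φ hφ using hx
  have hmul (u v : P) : φ (u * v) = φ u * φ v := by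
    refine A.smul_right_cancel hA.1 (x := x) ?_
    rw [← hφ, ← A.smul_smul, ← hφ, ← A.smul_rmul, ← hφ, A.rmul_rmul]
    rfl
  refine ⟨MonoidHom.mk' φ hmul, (injective_iff_map_eq_one _).2 fun u hu => ?_, hφ⟩
  have hu' : A.rmul x u = x := by rw [hφ, show φ u = 1 from hu, A.one_smul]
  exact Subtype.ext (hA.2 _ _ hu')

variable (A P) in
def FixPairs.toFixedPoints (t : A.FixPairs P) : fixedPoints P A.leftOrbits :=
  ⟨Quotient.mk _ t.1.2, A.mk_mem_fixedPoints_iff.2 fun u => ⟨t.1.1 u, t.2.2 u⟩⟩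

lemma FixPairs.toFixedPoints_surjective (hA : A.Bifree) :
    Function.Surjective (FixPairs.toFixedPoints A P) := by
  rintro ⟨ω, hω⟩
  obtain ⟨x, rfl⟩ := Quotient.mk_surjective ω
  obtain ⟨φ, hφ, hx⟩ := A.exists_injective_mem_fix hA (A.mk_mem_fixedPoints_iff.1 hω)
  exact ⟨⟨(φ, x), hφ, hx⟩, rfl⟩

lemma FixPairs.toFixedPoints_eq_iff (hA : A.LeftFree) (t t' : A.FixPairs P) :
    toFixedPoints A P t = toFixedPoints A P t' ↔ t ∈ orbit (ConjAct H) t' := by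
  refine ⟨fun h => ?_, fun ⟨c, hc⟩ => ?_⟩
  · obtain ⟨h, hh⟩ := Quotient.exact (congrArg Subtype.val h)
    refine mem_orbit_symm.1 ⟨ConjAct.toConjAct h, FixPairs.ext ?_ hh.symm⟩
    ext u
    refine A.smul_right_cancel hA (x := t'.1.2) ?_
    show A.smul (ConjAct.toConjAct h • t.1.1 u) _ = _
    rw [← t'.2.2 u, hh, A.smul_rmul, t.2.2 u, ConjAct.toConjAct_smul, A.smul_smul, A.smul_smul,
      inv_mul_cancel_right]
  · subst hc
    refine Subtype.ext (Quotient.sound ⟨(ConjAct.ofConjAct c)⁻¹, ?_⟩)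
    show t'.1.2 = A.smul _ (A.smul _ t'.1.2)
    rw [A.smul_smul, inv_mul_cancel, A.one_smul]

lemma card_fixPairs (hA : A.Bifree) :
    Nat.card (A.FixPairs P) = Nat.card (fixedPoints P A.leftOrbits) * Nat.card H :=
  card_eq_card_mul_card_of_free (G := ConjAct H) (fun _ _ => FixPairs.eq_one_of_smul_eq hA.1) _
    (FixPairs.toFixedPoints_surjective hA) (FixPairs.toFixedPoints_eq_iff hA.1)

lemma card_fiber_range [Finite G] [Finite H] [Finite X] (Q : Subgroup H) :
    Nat.card {t : A.FixPairs P // t.1.1.range = Q} =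
      ∑ᶠ φ : {φ : P →* H // Function.Injective φ ∧ φ.range = Q}, Nat.card (A.Fix P φ) := by
  have := Fintype.ofFinite {φ : P →* H // Function.Injective φ ∧ φ.range = Q}
  rw [finsum_eq_sum_of_fintype, ← Nat.card_sigma]
  exact Nat.card_congr
    { toFun t := ⟨⟨t.1.1.1, t.1.2.1, t.2⟩, t.1.1.2, t.1.2.2⟩
      invFun s := ⟨⟨(s.1.1, s.2.1), s.1.2.1, s.2.2⟩, s.1.2.2⟩
      left_inv _ := rfl
      right_inv _ := rfl }

theorem card_normalizer_dvd_sum_card_fix [Finite G] [Finite H] [Finite X] (hA : A.LeftFree)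
    (Q : Subgroup H) :
    Nat.card (Subgroup.normalizer (Q : Set H)) ∣
      ∑ᶠ φ : {φ : P →* H // Function.Injective φ ∧ φ.range = Q}, Nat.card (A.Fix P φ) := by
  rw [← A.card_fiber_range, ← Subgroup.card_stabilizer_conjAct]
  exact card_stabilizer_dvd_card_fiber FixPairs.range_smul
    (fun _ _ => FixPairs.eq_one_of_smul_eq hA) Q

theorem sum_card_fix_div_eq_card_fixedPoints [Finite G] [Finite H] [Finite X] (hA : A.Bifree)
    (R : Finset (Subgroup H))
    (hcover : ∀ Q : Subgroup H, Nonempty (P ≃* Q) → ∃ Q' ∈ R, SubSConj Q Q')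
    (hdisj : ∀ Q ∈ R, ∀ Q' ∈ R, SubSConj Q Q' → Q = Q') :
    ∑ Q ∈ R, (∑ᶠ φ : {φ : P →* H // Function.Injective φ ∧ φ.range = Q},
        Nat.card (A.Fix P φ)) / Nat.card (Subgroup.normalizer (Q : Set H)) =
      Nat.card (fixedPoints P A.leftOrbits) := by
  have : Finite (ConjAct H) := inferInstanceAs (Finite H)
  have hcover' (t : A.FixPairs P) : ∃ Q ∈ R, t.1.1.range ∈ orbit (ConjAct H) Q := by
    obtain ⟨Q, hQ, hconj⟩ := hcover t.1.1.range ⟨MonoidHom.ofInjective t.2.1⟩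
    exact ⟨Q, hQ, mem_orbit_symm.1 (Subgroup.mem_orbit_conjAct_iff.2 hconj)⟩
  have hcount := card_eq_card_mul_sum_card_fiber_div FixPairs.range_smul
    (fun _ _ => FixPairs.eq_one_of_smul_eq hA.1) R hcover'
    fun Q hQ Q' hQ' h => hdisj Q hQ Q' hQ' (Subgroup.mem_orbit_conjAct_iff.1 h)
  rw [card_fixPairs hA, mul_comm] at hcount
  simp only [card_fiber_range, Subgroup.card_stabilizer_conjAct] at hcount
  exact (Nat.eq_of_mul_eq_mul_left Nat.card_pos hcount).symm

lemma card_leftOrbits_eq_div [Finite H] (hA : A.LeftFree) :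
    Nat.card A.leftOrbits = Nat.card X / Nat.card H := by
  let : MulAction H X := { smul := A.smul, one_smul := A.one_smul, mul_smul := A.mul_smul }
  have hX : Nat.card X = Nat.card A.leftOrbits * Nat.card H := by
    refine card_eq_card_mul_card_of_free hA (Quotient.mk _) Quotient.mk_surjective fun x y => ?_
    refine Quotient.eq.trans ⟨fun ⟨h, hxy⟩ => mem_orbit_symm.1 ⟨h, hxy.symm⟩, fun hx => ?_⟩
    obtain ⟨h, hxy⟩ := mem_orbit_symm.2 hx
    exact ⟨h, hxy.symm⟩
  rw [hX, Nat.mul_div_cancel _ Nat.card_pos]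

end BisetAction

/-- Let `S` be a finite `p`-group, `X` a finite bifree `(S,S)`-biset and
`P ≤ S`.  Then (i) for every subgroup `Q ≤ S` abstractly isomorphic to `P`, `|N_S(Q)|`
divides `∑_{φ : P ≅ Q} |X^{(P,φ)}|`, and (ii) for any set `R` of representatives of the
`S`-conjugacy classes of subgroups of `S` isomorphic to `P`,
`∑_{[Q] ∈ R} (∑_{φ : P ≅ Q} |X^{(P,φ)}|)/|N_S(Q)| ≡ |X|/|S| (mod p)`. -/
theorem fixedPoint_congruence_subgroupwise
    (p : ℕ) (hp : p.Prime) (S : Type*) [Group S] [Finite S] (hS : IsPGroup p S)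
    (X : Type*) [Finite X] (A : BisetAction S S X) (hA : A.Bifree) (P : Subgroup S) :
    (∀ Q : Subgroup S, Nonempty (P ≃* Q) →
      Nat.card (Subgroup.normalizer (Q : Set S)) ∣
        ∑ᶠ φ : {φ : P →* S // Function.Injective φ ∧ φ.range = Q},
          Nat.card (A.Fix P (φ : P →* S))) ∧
    (∀ R : Finset (Subgroup S),
      (∀ Q ∈ R, Nonempty (P ≃* Q)) →
      (∀ Q : Subgroup S, Nonempty (P ≃* Q) → ∃ Q' ∈ R, SubSConj Q Q') →
      (∀ Q ∈ R, ∀ Q' ∈ R, SubSConj Q Q' → Q = Q') →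
      (∑ Q ∈ R,
          (∑ᶠ φ : {φ : P →* S // Function.Injective φ ∧ φ.range = Q},
            Nat.card (A.Fix P (φ : P →* S))) / Nat.card (Subgroup.normalizer (Q : Set S))) ≡
        Nat.card X / Nat.card S [MOD p]) := by
  have : Fact p.Prime := ⟨hp⟩
  refine ⟨fun Q _ => A.card_normalizer_dvd_sum_card_fix hA.1 Q, fun R _ hcover hdisj => ?_⟩
  rw [A.sum_card_fix_div_eq_card_fixedPoints hA R hcover hdisj, ← A.card_leftOrbits_eq_div hA.1]
  exact ((hS.to_subgroup P).card_modEq_card_fixedPoints A.leftOrbits).symm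
end
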